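/- arXiv:0809.1699 — 10 statements merged into one kernel-verified Lean document; each statement's English description precedes it below -/
import Mathlib

section
/- Let n ≥ 6 and let Γ_1,…,Γ_{n−2} be 3-element subsets of N = {1,…,n} satisfying condition (†). Then every element of N has valence at least 2, at least 6 elements of N have valence exactly 2, and if in addition every valence is at most 3 then exactly 6 elements of N have valence 2. -/
open Finset

/-!
Double counting incidences gives `∑ᵢ valence i = 3(n - 2) = 3n - 6`. If some `i` had
valence at most 1, then at least `n - 3` hyperedges avoid `i`, and `n - 3` of them cover at
most the `n - 1` points other than `i`, contradicting (†). So every valence is at least 2, and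
since each point of valence `≥ 3` contributes at least 3 to the sum while each point of
valence 2 falls short by exactly 1, at least (exactly, when valences are at most 3) six points
have valence 2.
-/

/-- The valence of an element `i` of `N = {1,…,n}` with respect to the hypergraph
`Γ_1, …, Γ_{n-2}`: the number of hyperedges containing `i`. -/
def valence (n : ℕ) (Γ : ℕ → Finset ℕ) (i : ℕ) : ℕ :=
  ((Finset.Icc 1 (n - 2)).filter fun j => i ∈ Γ j).card

theorem sum_card_filter_mem_eq_sum_card {V E : Type*} [DecidableEq V] (s : Finset V)
    (t : Finset E) (Γ : E → Finset V) (hsub : ∀ e ∈ t, Γ e ⊆ s) :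
    ∑ v ∈ s, #(t.filter (v ∈ Γ ·)) = ∑ e ∈ t, #(Γ e) := by
  refine (sum_card_bipartiteAbove_eq_sum_card_bipartiteBelow (fun v e => v ∈ Γ e)).trans
    (sum_congr rfl fun e he => ?_)
  rw [bipartiteBelow, filter_mem_eq_inter, inter_eq_right.mpr (hsub e he)]

theorem sum_valence_eq {n : ℕ} {Γ : ℕ → Finset ℕ}
    (hsub : ∀ j ∈ Icc 1 (n - 2), Γ j ⊆ Icc 1 n)
    (hcard : ∀ j ∈ Icc 1 (n - 2), #(Γ j) = 3) :
    ∑ i ∈ Icc 1 n, valence n Γ i = 3 * (n - 2) := by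
  unfold valence
  rw [sum_card_filter_mem_eq_sum_card _ _ _ hsub, sum_congr rfl hcard,
    sum_const, Nat.card_Icc, smul_eq_mul, Nat.add_sub_cancel, mul_comm]

theorem two_le_valence_of_dagger {n : ℕ} (hn : 5 ≤ n) {Γ : ℕ → Finset ℕ}
    (hsub : ∀ j ∈ Icc 1 (n - 2), Γ j ⊆ Icc 1 n)
    (hdag : ∀ S ⊆ Icc 1 (n - 2), 2 ≤ #S → #S ≤ n - 3 → #S + 3 ≤ #(S.biUnion Γ))
    {i : ℕ} (hi : i ∈ Icc 1 n) : 2 ≤ valence n Γ i := by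
  by_contra! hlt
  have hsplit := card_filter_add_card_filter_not (s := Icc 1 (n - 2)) (p := (i ∈ Γ ·))
  have havoid : n - 3 ≤ #((Icc 1 (n - 2)).filter (i ∉ Γ ·)) := by
    rw [valence] at hlt
    simp only [Nat.card_Icc] at hsplit
    omega
  obtain ⟨S, hSavoid, hScard⟩ := exists_subset_card_eq havoid
  have hcover : S.biUnion Γ ⊆ (Icc 1 n).erase i := by
    intro x hx
    obtain ⟨j, hjS, hxj⟩ := mem_biUnion.mp hx
    obtain ⟨hj, hij⟩ := mem_filter.mp (hSavoid hjS)
    exact mem_erase.mpr ⟨fun hxi => hij (hxi ▸ hxj), hsub j hj hxj⟩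
  have hupper := card_le_card hcover
  rw [card_erase_of_mem hi, Nat.card_Icc] at hupper
  have hlower := hdag S (hSavoid.trans (filter_subset _ _)) (by omega) (by omega)
  omega

section

variable {α : Type*} {s : Finset α} {f : α → ℕ}

theorem three_mul_card_le_sum_add_card_filter_eq_two (h2 : ∀ a ∈ s, 2 ≤ f a) :
    3 * #s ≤ ∑ a ∈ s, f a + #(s.filter (f · = 2)) := by
  rw [card_filter, ← sum_add_distrib, mul_comm, ← smul_eq_mul, ← sum_const]
  refine sum_le_sum fun a ha => ?_
  have := h2 a ha
  split_ifs <;> omega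

theorem sum_add_card_filter_eq_two_eq_three_mul (h2 : ∀ a ∈ s, 2 ≤ f a)
    (h3 : ∀ a ∈ s, f a ≤ 3) :
    ∑ a ∈ s, f a + #(s.filter (f · = 2)) = 3 * #s := by
  rw [card_filter, ← sum_add_distrib, mul_comm, ← smul_eq_mul, ← sum_const]
  refine sum_congr rfl fun a ha => ?_
  have := h2 a ha
  have := h3 a ha
  split_ifs <;> omega

end

/-- For a 3-uniform hypergraph `Γ_1,…,Γ_{n-2}` on `N = {1,…,n}` (n ≥ 6) satisfying
condition (†), every element of `N` has valence at least 2, at least 6 elements have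
valence exactly 2, and if in addition every valence is at most 3 then exactly 6
elements have valence 2. -/
theorem valence_of_dagger (n : ℕ) (hn : 6 ≤ n) (Γ : ℕ → Finset ℕ)
    (hsub : ∀ j ∈ Finset.Icc 1 (n - 2), Γ j ⊆ Finset.Icc 1 n)
    (hcard : ∀ j ∈ Finset.Icc 1 (n - 2), (Γ j).card = 3)
    (hdag : ∀ S ⊆ Finset.Icc 1 (n - 2), 2 ≤ S.card → S.card ≤ n - 3 →
      S.card + 3 ≤ (S.biUnion Γ).card) :
    (∀ i ∈ Finset.Icc 1 n, 2 ≤ valence n Γ i) ∧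
    6 ≤ ((Finset.Icc 1 n).filter fun i => valence n Γ i = 2).card ∧
    ((∀ i ∈ Finset.Icc 1 n, valence n Γ i ≤ 3) →
      ((Finset.Icc 1 n).filter fun i => valence n Γ i = 2).card = 6) := by
  have h2 : ∀ i ∈ Icc 1 n, 2 ≤ valence n Γ i := fun i hi =>
    two_le_valence_of_dagger (by omega) hsub hdag hi
  have hsum := sum_valence_eq hsub hcard
  have hN : #(Icc 1 n) = n := by simp
  refine ⟨h2, ?_, fun h3 => ?_⟩
  · have := three_mul_card_le_sum_add_card_filter_eq_two h2
    omega
  · have := sum_add_card_filter_eq_two_eq_three_mul h2 h3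
    omega
end

section
/- Let Γ_1,…,Γ_d be finite subsets of N = {1,…,n}, each with at least 3 elements, such that |⋃_{j∈S} Γ_j| − 2 ≥ Σ_{j∈S}(|Γ_j| − 2) for every nonempty S ⊆ {1,…,d}, and such that Σ_{j=1}^{d}(|Γ_j| − 2) = n − 2. Then ⋃_{j=1}^{d} Γ_j = N and the hypergraph Γ is connected, i.e. the smallest equivalence relation on {1,…,d} containing all pairs (i,j) with Γ_i ∩ Γ_j ≠ ∅ has a single equivalence class. -/
open Finset

/-- For a hypergraph `Γ_1,…,Γ_d` on `N = {1,…,n}` with all `|Γ_j| ≥ 3`, satisfying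
condition (‡) (`|⋃_{j∈S} Γ_j| − 2 ≥ Σ_{j∈S}(|Γ_j| − 2)` for all nonempty `S`) and the
dimension-matching condition `Σ_j (|Γ_j| − 2) = n − 2`, the union of all hyperedges is
all of `N` and the hypergraph is connected: the smallest equivalence relation on
`{1,…,d}` containing all pairs `(i,j)` with `Γ_i ∩ Γ_j ≠ ∅` has a single class. -/
theorem union_eq_and_connected (n d : ℕ) (hd : 1 ≤ d) (Γ : ℕ → Finset ℕ)
    (hsub : ∀ j ∈ Finset.Icc 1 d, Γ j ⊆ Finset.Icc 1 n)
    (hcard : ∀ j ∈ Finset.Icc 1 d, 3 ≤ (Γ j).card)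
    (hddag : ∀ S ⊆ Finset.Icc 1 d, S.Nonempty →
      (∑ j ∈ S, ((Γ j).card - 2)) + 2 ≤ (S.biUnion Γ).card)
    (hdim : ∑ j ∈ Finset.Icc 1 d, ((Γ j).card - 2) = n - 2) :
    (Finset.Icc 1 d).biUnion Γ = Finset.Icc 1 n ∧
    ∀ i ∈ Finset.Icc 1 d, ∀ j ∈ Finset.Icc 1 d,
      Relation.EqvGen
        (fun i' j' => i' ∈ Finset.Icc 1 d ∧ j' ∈ Finset.Icc 1 d ∧ (Γ i' ∩ Γ j').Nonempty)
        i j := by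
  classical
  have h1d : (1 : ℕ) ∈ Finset.Icc 1 d := by simp [hd]
  have hn : 3 ≤ n := by
    have h1 := hcard 1 h1d
    have h2 : (Γ 1).card ≤ (Finset.Icc 1 n).card := Finset.card_le_card (hsub 1 h1d)
    simpa [Nat.card_Icc] using h1.trans h2
  have hcardIcc : (Finset.Icc 1 n).card = n := by simp [Nat.card_Icc]
  have hUsub : (Finset.Icc 1 d).biUnion Γ ⊆ Finset.Icc 1 n := by
    intro x hx
    rcases Finset.mem_biUnion.mp hx with ⟨j, hj, hxj⟩
    exact hsub j hj hxj
  have hU := hddag (Finset.Icc 1 d) le_rfl ⟨1, h1d⟩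
  rw [hdim] at hU
  have hUcard : n ≤ ((Finset.Icc 1 d).biUnion Γ).card := by omega
  have hUeq : (Finset.Icc 1 d).biUnion Γ = Finset.Icc 1 n := by
    apply Finset.eq_of_subset_of_card_le hUsub
    omega
  refine ⟨hUeq, ?_⟩
  intro i hi j hj
  set rel := fun i' j' => i' ∈ Finset.Icc 1 d ∧ j' ∈ Finset.Icc 1 d ∧ (Γ i' ∩ Γ j').Nonempty
    with hrel
  by_contra hcon
  set S := (Finset.Icc 1 d).filter (fun k => Relation.EqvGen rel i k) with hSdef
  set T := (Finset.Icc 1 d).filter (fun k => ¬ Relation.EqvGen rel i k) with hTdef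
  have hiS : i ∈ S := Finset.mem_filter.mpr ⟨hi, Relation.EqvGen.refl i⟩
  have hjT : j ∈ T := Finset.mem_filter.mpr ⟨hj, hcon⟩
  have hS := hddag S (Finset.filter_subset _ _) ⟨i, hiS⟩
  have hT := hddag T (Finset.filter_subset _ _) ⟨j, hjT⟩
  have hsum : (∑ k ∈ S, ((Γ k).card - 2)) + (∑ k ∈ T, ((Γ k).card - 2)) = n - 2 := by
    rw [hSdef, hTdef, Finset.sum_filter_add_sum_filter_not, hdim]
  have hdisj : Disjoint (S.biUnion Γ) (T.biUnion Γ) := by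
    rw [Finset.disjoint_left]
    intro x hxS hxT
    rcases Finset.mem_biUnion.mp hxS with ⟨a, haS, hxa⟩
    rcases Finset.mem_biUnion.mp hxT with ⟨b, hbT, hxb⟩
    have haS' := Finset.mem_filter.mp haS
    have hbT' := Finset.mem_filter.mp hbT
    have hab : rel a b := ⟨haS'.1, hbT'.1, ⟨x, Finset.mem_inter.mpr ⟨hxa, hxb⟩⟩⟩
    exact hbT'.2 (Relation.EqvGen.trans _ _ _ haS'.2 (Relation.EqvGen.rel _ _ hab))
  have hunion : (S.biUnion Γ).card + (T.biUnion Γ).card ≤ n := by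
    rw [← Finset.card_union_of_disjoint hdisj]
    calc ((S.biUnion Γ) ∪ (T.biUnion Γ)).card ≤ (Finset.Icc 1 n).card := by
          apply Finset.card_le_card
          intro x hx
          rcases Finset.mem_union.mp hx with hx | hx
          · rcases Finset.mem_biUnion.mp hx with ⟨a, ha, hxa⟩
            exact hsub a (Finset.filter_subset _ _ ha) hxa
          · rcases Finset.mem_biUnion.mp hx with ⟨a, ha, hxa⟩
            exact hsub a (Finset.filter_subset _ _ ha) hxa
      _ = n := hcardIcc
  omega
end

section
/- Let n ≥ 6. Let Γ′_1,…,Γ′_{n−2} be 3-element subsets of {1,…,n} satisfying condition (†) (with parameter n), such that: n ∈ Γ′_{n−3}; Γ′_{n−2} = {i, n−1, n} for some i; and n ∉ Γ′_j for all j ≤ n−4. Let a ∈ {1,…,n} with a ∉ Γ′_{n−3} and a ∉ {i, n−1}. Define 3-element subsets of {1,…,n+1} by: Γ_j = Γ′_j for j ≤ n−3, Γ_{n−2} = {i, n−1, n+1}, and Γ_{n−1} = {a, n, n+1}. Then Γ_1,…,Γ_{n−1} satisfy condition (†) with parameter n+1, i.e. |⋃_{j∈S} Γ_j| ≥ |S|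 + 3 for every S ⊆ {1,…,n−1} with 2 ≤ |S| ≤ n−2. -/
open Finset

/-! If `n - 1 ∉ S`, every edge of `S` is an old edge except that `Γ_{n-2}` has `n + 1` in place
of `n`; collapsing `n + 1 ↦ n` maps `⋃_S Γ` onto `⋃_S Γ'`, so (†) for `Γ'` transfers. The one
exception is `S = {1, …, n - 2}`, which is too large for the old (†); there (†) for `{1, …, n - 3}`
together with the fresh vertex `n + 1` suffices.

If `n - 1 ∈ S`, the old edges indexed by `S \ {n - 1}` are still covered by `⋃_S Γ`, because
`Γ'_{n-2} = {i, n - 1, n} ⊆ Γ_{n-2} ∪ Γ_{n-1}`, and `⋃_S Γ` also contains the fresh vertex `n + 1`: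
one more edge, one more vertex. For `|S| = 2` the old (†) is not available, and instead one checks
that `Γ_{n-1} = {a, n, n + 1}` meets every other edge in at most one vertex. -/

theorem card_biUnion_le_of_image_eq {ι α β : Type*} [DecidableEq α] [DecidableEq β]
    {S : Finset ι} {Γ : ι → Finset α} {Γ' : ι → Finset β} (f : α → β)
    (h : ∀ j ∈ S, (Γ j).image f = Γ' j) : (S.biUnion Γ').card ≤ (S.biUnion Γ).card :=
  calc (S.biUnion Γ').card = ((S.biUnion Γ).image f).card := by
        rw [biUnion_image, biUnion_congr rfl h]
    _ ≤ (S.biUnion Γ).card := card_image_le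

theorem ne_of_card_eq_three {α : Type*} [DecidableEq α] {x y z : α}
    (h : ({x, y, z} : Finset α).card = 3) : x ≠ y ∧ x ≠ z := by
  constructor <;> rintro rfl
  · have := card_le_two (a := x) (b := z)
    simp_all
  · have := card_le_two (a := y) (b := x)
    simp_all

theorem subset_Icc_pred_of_notMem {S : Finset ℕ} {m : ℕ} (hS : S ⊆ Icc 1 m) (hm : m ∉ S) :
    S ⊆ Icc 1 (m - 1) := fun j hj => by
  have := mem_Icc.mp (hS hj)
  have : j ≠ m := fun h => hm (h ▸ hj)
  simp only [mem_Icc]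
  omega

section Construction

variable {n : ℕ} {Γ' Γ : ℕ → Finset ℕ} {i a : ℕ}

theorem image_collapse_eq (hsub : ∀ j ∈ Icc 1 (n - 2), Γ' j ⊆ Icc 1 n)
    (hlast2 : Γ' (n - 2) = {i, n - 1, n}) (hi : i ≤ n)
    (hΓ : ∀ j ∈ Icc 1 (n - 3), Γ j = Γ' j) (hΓ2 : Γ (n - 2) = {i, n - 1, n + 1}) :
    ∀ j ∈ Icc 1 (n - 2), (Γ j).image (fun x => if x = n + 1 then n else x) = Γ' j := by
  intro j hj
  by_cases hjn : j = n - 2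
  · rw [hjn, hΓ2, hlast2, image_insert, image_insert, image_singleton,
      if_neg (by omega), if_neg (by omega), if_pos rfl]
  · rw [hΓ j (by simp only [mem_Icc] at hj ⊢; omega)]
    conv_rhs => rw [← image_id (s := Γ' j)]
    refine image_congr fun x hx => ?_
    have := mem_Icc.mp (hsub j hj hx)
    simp only [id, ite_eq_right_iff]
    omega

theorem card_edge_eq_three (hcard : ∀ j ∈ Icc 1 (n - 2), (Γ' j).card = 3)
    (hi : i ≤ n) (hi1 : i ≠ n - 1)
    (hΓ : ∀ j ∈ Icc 1 (n - 3), Γ j = Γ' j) (hΓ2 : Γ (n - 2) = {i, n - 1, n + 1}) :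
    ∀ j ∈ Icc 1 (n - 2), (Γ j).card = 3 := by
  intro j hj
  by_cases hjn : j = n - 2
  · rw [hjn, hΓ2]
    exact card_eq_three.mpr ⟨i, n - 1, n + 1, hi1, by omega, by omega, rfl⟩
  · rw [hΓ j (by simp only [mem_Icc] at hj ⊢; omega)]
    exact hcard j hj

theorem card_inter_lastEdge_le_one (hsub : ∀ j ∈ Icc 1 (n - 2), Γ' j ⊆ Icc 1 n)
    (hnotn : ∀ j ∈ Icc 1 (n - 4), n ∉ Γ' j) (hin : i ≠ n) (ha : a ≤ n)
    (ha1 : a ∉ Γ' (n - 3)) (ha2 : a ≠ i) (ha3 : a ≠ n - 1)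
    (hΓ : ∀ j ∈ Icc 1 (n - 3), Γ j = Γ' j) (hΓ2 : Γ (n - 2) = {i, n - 1, n + 1})
    (hΓ3 : Γ (n - 1) = {a, n, n + 1}) :
    ∀ j ∈ Icc 1 (n - 2), (Γ j ∩ Γ (n - 1)).card ≤ 1 := by
  intro j hj
  rw [card_le_one_iff_subset_singleton, hΓ3]
  obtain ⟨hj1, hj2⟩ := mem_Icc.mp hj
  rcases (by omega : j ≤ n - 4 ∨ j = n - 3 ∨ j = n - 2) with hj' | rfl | rfl
  · refine ⟨a, fun x hx => ?_⟩
    rw [hΓ j (by simp only [mem_Icc]; omega), mem_inter] at hx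
    have := mem_Icc.mp (hsub j hj hx.1)
    have := hnotn j (mem_Icc.mpr ⟨hj1, hj'⟩)
    simp only [mem_insert, mem_singleton] at hx ⊢
    grind
  · refine ⟨n, fun x hx => ?_⟩
    rw [hΓ _ (by simp only [mem_Icc]; omega), mem_inter] at hx
    have := mem_Icc.mp (hsub _ hj hx.1)
    simp only [mem_insert, mem_singleton] at hx ⊢
    grind
  · refine ⟨n + 1, fun x hx => ?_⟩
    rw [hΓ2] at hx
    simp only [mem_inter, mem_insert, mem_singleton] at hx ⊢
    omega

theorem five_le_card_union_lastEdge
    (hsub : ∀ j ∈ Icc 1 (n - 2), Γ' j ⊆ Icc 1 n) (hcard : ∀ j ∈ Icc 1 (n - 2), (Γ' j).card = 3)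
    (hnotn : ∀ j ∈ Icc 1 (n - 4), n ∉ Γ' j) (hi : i ≤ n) (hi1 : i ≠ n - 1) (hin : i ≠ n)
    (ha : a ≤ n) (han : a ≠ n) (ha1 : a ∉ Γ' (n - 3)) (ha2 : a ≠ i) (ha3 : a ≠ n - 1)
    (hΓ : ∀ j ∈ Icc 1 (n - 3), Γ j = Γ' j) (hΓ2 : Γ (n - 2) = {i, n - 1, n + 1})
    (hΓ3 : Γ (n - 1) = {a, n, n + 1}) :
    ∀ j ∈ Icc 1 (n - 2), 5 ≤ (Γ j ∪ Γ (n - 1)).card := by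
  intro j hj
  have hlast : (Γ (n - 1)).card = 3 := by
    rw [hΓ3]
    exact card_eq_three.mpr ⟨a, n, n + 1, han, by omega, by omega, rfl⟩
  have := card_union_add_card_inter (Γ j) (Γ (n - 1))
  have := card_edge_eq_three hcard hi hi1 hΓ hΓ2 j hj
  have := card_inter_lastEdge_le_one hsub hnotn hin ha ha1 ha2 ha3 hΓ hΓ2 hΓ3 j hj
  omega

theorem biUnion_erase_lastEdge_subset (hlast2 : Γ' (n - 2) = {i, n - 1, n})
    (hΓ : ∀ j ∈ Icc 1 (n - 3), Γ j = Γ' j) (hΓ2 : Γ (n - 2) = {i, n - 1, n + 1})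
    (hΓ3 : Γ (n - 1) = {a, n, n + 1}) {S : Finset ℕ} (hS : S ⊆ Icc 1 (n - 1))
    (hlast : n - 1 ∈ S) : (S.erase (n - 1)).biUnion Γ' ⊆ S.biUnion Γ := by
  refine biUnion_subset.mpr fun j hj x hx => mem_biUnion.mpr ?_
  obtain ⟨hjn, hjS⟩ := mem_erase.mp hj
  have := mem_Icc.mp (hS hjS)
  by_cases hj2 : j = n - 2
  · rw [hj2, hlast2] at hx
    simp only [mem_insert, mem_singleton] at hx
    rcases hx with hx | hx | hx
    · exact ⟨n - 2, hj2 ▸ hjS, by simp [hΓ2, hx]⟩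
    · exact ⟨n - 2, hj2 ▸ hjS, by simp [hΓ2, hx]⟩
    · exact ⟨n - 1, hlast, by simp [hΓ3, hx]⟩
  · exact ⟨j, hjS, by rwa [hΓ j (by simp only [mem_Icc]; omega)]⟩

theorem card_add_three_le_of_cover (hsub : ∀ j ∈ Icc 1 (n - 2), Γ' j ⊆ Icc 1 n)
    (hdag : ∀ S ⊆ Icc 1 (n - 2), 2 ≤ S.card → S.card ≤ n - 3 →
      S.card + 3 ≤ (S.biUnion Γ').card)
    {S U : Finset ℕ} (hU : U ⊆ Icc 1 (n - 2)) (hU2 : 2 ≤ U.card) (hUn : U.card ≤ n - 3)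
    (hcover : U.biUnion Γ' ⊆ S.biUnion Γ) (hnew : n + 1 ∈ S.biUnion Γ)
    (hSU : U.card + 1 = S.card) : S.card + 3 ≤ (S.biUnion Γ).card := by
  have hfresh : n + 1 ∉ U.biUnion Γ' := fun h => by
    obtain ⟨j, hj, hx⟩ := mem_biUnion.mp h
    have := mem_Icc.mp (hsub j (hU hj) hx)
    omega
  have := card_lt_card ((ssubset_iff_of_subset hcover).mpr ⟨n + 1, hnew, hfresh⟩)
  have := hdag U hU hU2 hUn
  omega

theorem card_add_three_le_of_subset_old_indices (hn : 6 ≤ n)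
    (hsub : ∀ j ∈ Icc 1 (n - 2), Γ' j ⊆ Icc 1 n)
    (hdag : ∀ S ⊆ Icc 1 (n - 2), 2 ≤ S.card → S.card ≤ n - 3 →
      S.card + 3 ≤ (S.biUnion Γ').card)
    (hlast2 : Γ' (n - 2) = {i, n - 1, n}) (hi : i ≤ n)
    (hΓ : ∀ j ∈ Icc 1 (n - 3), Γ j = Γ' j) (hΓ2 : Γ (n - 2) = {i, n - 1, n + 1})
    {S : Finset ℕ} (hS : S ⊆ Icc 1 (n - 2)) (hS2 : 2 ≤ S.card) :
    S.card + 3 ≤ (S.biUnion Γ).card := by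
  rcases (card_le_card hS).lt_or_eq with hlt | heq
  · calc S.card + 3 ≤ (S.biUnion Γ').card := by
          refine hdag S hS hS2 ?_
          rw [Nat.card_Icc] at hlt
          omega
      _ ≤ (S.biUnion Γ).card := card_biUnion_le_of_image_eq _
          fun j hj => image_collapse_eq hsub hlast2 hi hΓ hΓ2 j (hS hj)
  · obtain rfl : S = Icc 1 (n - 2) := eq_of_subset_of_card_le hS heq.ge
    have hold : Icc 1 (n - 3) ⊆ Icc 1 (n - 2) := Icc_subset_Icc_right (by omega)
    refine card_add_three_le_of_cover hsub hdag hold (by rw [Nat.card_Icc]; omega)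
      (by rw [Nat.card_Icc]; omega) ?_ (mem_biUnion.mpr ⟨n - 2, by simp only [mem_Icc]; omega,
        by simp [hΓ2]⟩) (by rw [Nat.card_Icc, Nat.card_Icc]; omega)
    rw [← biUnion_congr rfl hΓ]
    exact biUnion_subset_biUnion_of_subset_left Γ hold

end Construction

/-- The inductive (Fibonacci-like) Construction 3.8 of Castravet–Tevelev: starting from
a 3-uniform hypergraph `Γ'_1,…,Γ'_{n-2}` on `{1,…,n}` satisfying condition (†), with
`n ∈ Γ'_{n-3}`, `Γ'_{n-2} = {i, n-1, n}`, and `n` in no other hyperedge, and choosing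
`a ∈ {1,…,n}` with `a ∉ Γ'_{n-3}` and `a ∉ {i, n-1}`, the hypergraph
`Γ_1,…,Γ_{n-1}` on `{1,…,n+1}` given by `Γ_j = Γ'_j` for `j ≤ n-3`,
`Γ_{n-2} = {i, n-1, n+1}`, `Γ_{n-1} = {a, n, n+1}` satisfies condition (†) with
parameter `n+1`. -/
theorem construction_satisfies_dagger (n : ℕ) (hn : 6 ≤ n)
    (Γ' : ℕ → Finset ℕ) (i a : ℕ)
    (hsub : ∀ j ∈ Finset.Icc 1 (n - 2), Γ' j ⊆ Finset.Icc 1 n)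
    (hcard : ∀ j ∈ Finset.Icc 1 (n - 2), (Γ' j).card = 3)
    (hdag : ∀ S ⊆ Finset.Icc 1 (n - 2), 2 ≤ S.card → S.card ≤ n - 3 →
      S.card + 3 ≤ (S.biUnion Γ').card)
    (hlast1 : n ∈ Γ' (n - 3))
    (hlast2 : Γ' (n - 2) = {i, n - 1, n})
    (hnotn : ∀ j ∈ Finset.Icc 1 (n - 4), n ∉ Γ' j)
    (haN : a ∈ Finset.Icc 1 n)
    (ha1 : a ∉ Γ' (n - 3)) (ha2 : a ≠ i) (ha3 : a ≠ n - 1)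
    (Γ : ℕ → Finset ℕ)
    (hΓ : ∀ j ∈ Finset.Icc 1 (n - 3), Γ j = Γ' j)
    (hΓ2 : Γ (n - 2) = {i, n - 1, n + 1})
    (hΓ3 : Γ (n - 1) = {a, n, n + 1}) :
    ∀ S ⊆ Finset.Icc 1 (n - 1), 2 ≤ S.card → S.card ≤ (n + 1) - 3 →
      S.card + 3 ≤ (S.biUnion Γ).card := by
  intro S hS hS2 hSn
  have hmem2 : n - 2 ∈ Icc 1 (n - 2) := by simp only [mem_Icc]; omega
  have hi : i ≤ n := (mem_Icc.mp (hsub _ hmem2 (by simp [hlast2]))).2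
  obtain ⟨hi1, hin⟩ := ne_of_card_eq_three (hlast2 ▸ hcard _ hmem2)
  have han : a ≠ n := fun h => ha1 (h ▸ hlast1)
  by_cases hlast : n - 1 ∈ S
  · have hU : S.erase (n - 1) ⊆ Icc 1 (n - 2) :=
      subset_Icc_pred_of_notMem ((erase_subset _ _).trans hS) (notMem_erase _ _)
    have hSU := card_erase_add_one hlast
    rcases (by omega : 2 ≤ (S.erase (n - 1)).card ∨ (S.erase (n - 1)).card = 1) with hU2 | hU1
    · exact card_add_three_le_of_cover hsub hdag hU hU2 (by omega)
        (biUnion_erase_lastEdge_subset hlast2 hΓ hΓ2 hΓ3 hS hlast)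
        (mem_biUnion.mpr ⟨n - 1, hlast, by simp [hΓ3]⟩) hSU
    · obtain ⟨j, hj⟩ := card_eq_one.mp hU1
      have := five_le_card_union_lastEdge hsub hcard hnotn hi hi1 hin (mem_Icc.mp haN).2
        han ha1 ha2 ha3 hΓ hΓ2 hΓ3 j (hU (by simp [hj]))
      have hpair : S.biUnion Γ = Γ j ∪ Γ (n - 1) := by
        rw [← insert_erase hlast, hj, biUnion_insert, singleton_biUnion, union_comm]
      rw [hpair]
      omega
  · exact card_add_three_le_of_subset_old_indices hn hsub hdag hlast2 hi hΓ hΓ2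
      (subset_Icc_pred_of_notMem hS hlast) hS2
end

section
/- Let Γ_1,…,Γ_d be finite subsets of a finite set N, each with at least 3 elements. For a nonempty S ⊆ {1,…,d}, let e_S denote the number of equivalence classes of ⋃_{i∈S} Γ_i under the smallest equivalence relation in which all elements of each Γ_i with i ∈ S are mutually equivalent. Then the following are equivalent: (a) |⋃_{i∈S} Γ_i| − 2 ≥ Σ_{i∈S}(|Γ_i| − 2) for every nonempty S ⊆ {1,…,d}; (b) |⋃_{i∈S} Γ_i| − e_S − 1 ≥ Σ_{i∈S}(|Γ_i| − 2) for every nonempty S ⊆ {1,…,d}. -/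
open Finset

/-- `numComponents Γ S` is the number of connected components of the sub-hypergraph
`{Γ_i}_{i∈S}`: the number of equivalence classes of `⋃_{i∈S} Γ_i` under the smallest
equivalence relation in which all elements of each `Γ_i` with `i ∈ S` are mutually
equivalent. -/
noncomputable def numComponents (Γ : ℕ → Finset ℕ) (S : Finset ℕ) : ℕ :=
  Nat.card (Quotient (Relation.EqvGen.setoid
    (fun a b : {x // x ∈ S.biUnion Γ} => ∃ i ∈ S, (a : ℕ) ∈ Γ i ∧ (b : ℕ) ∈ Γ i)))

/-!
Split `S` into the index sets `T_1, …, T_e` of the `e = e_S` connected components. The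
unions `⋃_{i∈T_q} Γ_i` are the components themselves, so they are disjoint with union
`⋃_{i∈S} Γ_i`; summing (a) over the components gives
`Σ_{i∈S}(|Γ_i| − 2) + 2 e_S ≤ |⋃_{i∈S} Γ_i|`, which implies (b) because `e_S ≥ 1`
(the union is nonempty). Conversely (b) implies (a), again because `e_S ≥ 1`.
-/

namespace Hypergraph

variable (Γ : ℕ → Finset ℕ) (S : Finset ℕ)

abbrev componentSetoid : Setoid {x // x ∈ S.biUnion Γ} :=
  Relation.EqvGen.setoid fun a b => ∃ i ∈ S, (a : ℕ) ∈ Γ i ∧ (b : ℕ) ∈ Γ i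

abbrev Component : Type := Quotient (componentSetoid Γ S)

noncomputable instance : Fintype (Component Γ S) := Fintype.ofFinite _

theorem numComponents_eq_card : numComponents Γ S = Fintype.card (Component Γ S) :=
  Nat.card_eq_fintype_card

theorem numComponents_pos (h : (S.biUnion Γ).Nonempty) : 0 < numComponents Γ S := by
  obtain ⟨x, hx⟩ := h
  have : Nonempty (Component Γ S) := ⟨⟦⟨x, hx⟩⟧⟩
  rw [numComponents_eq_card]
  exact Fintype.card_pos

variable {Γ S}

theorem mk_eq_mk_of_mem {i : ℕ} (hi : i ∈ S) {a b : {x // x ∈ S.biUnion Γ}}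
    (ha : (a : ℕ) ∈ Γ i) (hb : (b : ℕ) ∈ Γ i) :
    (⟦a⟧ : Component Γ S) = ⟦b⟧ :=
  Quotient.sound (Relation.EqvGen.rel _ _ ⟨i, hi, ha, hb⟩)

open scoped Classical in
/-- The indices `i ∈ S` whose hyperedge `Γ i` lies in the component `q`. -/
noncomputable def edgeIndices (q : Component Γ S) : Finset ℕ :=
  S.filter fun i => ∃ a : {x // x ∈ S.biUnion Γ}, (a : ℕ) ∈ Γ i ∧ ⟦a⟧ = q

theorem mem_edgeIndices {q : Component Γ S} {i : ℕ} :
    i ∈ edgeIndices q ↔ i ∈ S ∧ ∃ a : {x // x ∈ S.biUnion Γ}, (a : ℕ) ∈ Γ i ∧ ⟦a⟧ = q := by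
  classical
  exact mem_filter

theorem edgeIndices_subset (q : Component Γ S) : edgeIndices q ⊆ S :=
  fun _ hi => (mem_edgeIndices.mp hi).1

theorem mk_eq_of_mem_edgeIndices {q : Component Γ S} {i : ℕ} (hi : i ∈ edgeIndices q)
    {a : {x // x ∈ S.biUnion Γ}} (ha : (a : ℕ) ∈ Γ i) : (⟦a⟧ : Component Γ S) = q := by
  obtain ⟨hiS, b, hb, rfl⟩ := mem_edgeIndices.mp hi
  exact mk_eq_mk_of_mem hiS ha hb

theorem edgeIndices_nonempty (q : Component Γ S) : (edgeIndices q).Nonempty := by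
  induction q using Quotient.inductionOn with
  | h a =>
    obtain ⟨i, hi, hai⟩ := mem_biUnion.mp a.2
    exact ⟨i, mem_edgeIndices.mpr ⟨hi, a, hai, rfl⟩⟩

theorem mem_edgeIndices_of_mem {i : ℕ} (hi : i ∈ S) {x : ℕ} (hx : x ∈ Γ i) :
    i ∈ edgeIndices (⟦⟨x, mem_biUnion.mpr ⟨i, hi, hx⟩⟩⟧ : Component Γ S) :=
  mem_edgeIndices.mpr ⟨hi, _, hx, rfl⟩

theorem pairwiseDisjoint_edgeIndices :
    ((univ : Finset (Component Γ S)) : Set (Component Γ S)).PairwiseDisjoint edgeIndices := by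
  intro q _ q' _ hqq'
  refine disjoint_left.mpr fun i hi hi' => hqq' ?_
  obtain ⟨_, a, ha, rfl⟩ := mem_edgeIndices.mp hi
  exact mk_eq_of_mem_edgeIndices hi' ha

theorem pairwiseDisjoint_biUnion_edgeIndices :
    ((univ : Finset (Component Γ S)) : Set (Component Γ S)).PairwiseDisjoint
      fun q => (edgeIndices q).biUnion Γ := by
  intro q _ q' _ hqq'
  refine disjoint_left.mpr fun x hx hx' => hqq' ?_
  obtain ⟨i, hi, hxi⟩ := mem_biUnion.mp hx
  obtain ⟨j, hj, hxj⟩ := mem_biUnion.mp hx'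
  have hxS : x ∈ S.biUnion Γ := mem_biUnion.mpr ⟨i, edgeIndices_subset q hi, hxi⟩
  exact (mk_eq_of_mem_edgeIndices hi (a := ⟨x, hxS⟩) hxi).symm.trans
    (mk_eq_of_mem_edgeIndices hj hxj)

theorem biUnion_edgeIndices (hΓ : ∀ i ∈ S, (Γ i).Nonempty) :
    (univ : Finset (Component Γ S)).biUnion edgeIndices = S := by
  refine Subset.antisymm (biUnion_subset.mpr fun q _ => edgeIndices_subset q) fun i hi => ?_
  obtain ⟨x, hx⟩ := hΓ i hi
  exact mem_biUnion.mpr ⟨_, mem_univ _, mem_edgeIndices_of_mem hi hx⟩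

theorem biUnion_biUnion_edgeIndices :
    (univ : Finset (Component Γ S)).biUnion (fun q => (edgeIndices q).biUnion Γ) =
      S.biUnion Γ := by
  refine Subset.antisymm (biUnion_subset.mpr fun q _ =>
    biUnion_subset_biUnion_of_subset_left _ (edgeIndices_subset q)) fun x hx => ?_
  obtain ⟨i, hi, hxi⟩ := mem_biUnion.mp hx
  exact mem_biUnion.mpr ⟨_, mem_univ _,
    mem_biUnion.mpr ⟨i, mem_edgeIndices_of_mem hi hxi, hxi⟩⟩

/-- Condition (a), summed over the connected components of `{Γ_i}_{i∈S}`. -/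
theorem sum_add_two_mul_numComponents_le
    (h : ∀ T ⊆ S, T.Nonempty → (∑ i ∈ T, ((Γ i).card - 2)) + 2 ≤ (T.biUnion Γ).card) :
    (∑ i ∈ S, ((Γ i).card - 2)) + 2 * numComponents Γ S ≤ (S.biUnion Γ).card := by
  have hΓ : ∀ i ∈ S, (Γ i).Nonempty := fun i hi => card_pos.mp <| by
    have hi' := h {i} (singleton_subset_iff.mpr hi) (singleton_nonempty i)
    rw [sum_singleton, singleton_biUnion] at hi'
    omega
  calc (∑ i ∈ S, ((Γ i).card - 2)) + 2 * numComponents Γ S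
      = ∑ q : Component Γ S, ((∑ i ∈ edgeIndices q, ((Γ i).card - 2)) + 2) := by
        rw [sum_add_distrib, ← sum_biUnion pairwiseDisjoint_edgeIndices,
          biUnion_edgeIndices hΓ, sum_const, card_univ, numComponents_eq_card, smul_eq_mul,
          mul_comm]
    _ ≤ ∑ q : Component Γ S, ((edgeIndices q).biUnion Γ).card :=
        sum_le_sum fun q _ =>
          h _ (edgeIndices_subset q) (edgeIndices_nonempty q)
    _ = (S.biUnion Γ).card := by
        rw [← card_biUnion pairwiseDisjoint_biUnion_edgeIndices, biUnion_biUnion_edgeIndices]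

end Hypergraph

theorem ddagger_iff_components_general (d : ℕ) (Γ : ℕ → Finset ℕ) :
    (∀ S ⊆ Finset.Icc 1 d, S.Nonempty →
        (∑ i ∈ S, ((Γ i).card - 2)) + 2 ≤ (S.biUnion Γ).card) ↔
    (∀ S ⊆ Finset.Icc 1 d, S.Nonempty →
        (∑ i ∈ S, ((Γ i).card - 2)) + numComponents Γ S + 1 ≤ (S.biUnion Γ).card) := by
  constructor
  · intro h S hS hne
    have hS' := h S hS hne
    have hsum := Hypergraph.sum_add_two_mul_numComponents_le
      fun T hT hT' => h T (hT.trans hS) hT'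
    have hpos := Hypergraph.numComponents_pos Γ S (card_pos.mp (by omega))
    omega
  · intro h S hS hne
    have hS' := h S hS hne
    have hpos := Hypergraph.numComponents_pos Γ S (card_pos.mp (by omega))
    omega

/-- For a hypergraph `Γ_1,…,Γ_d` of subsets of a finite set `N`, each with at least 3
elements, the condition (‡): `|⋃_{i∈S} Γ_i| − 2 ≥ Σ_{i∈S}(|Γ_i| − 2)` for every
nonempty `S ⊆ {1,…,d}` is equivalent to the condition
`|⋃_{i∈S} Γ_i| − e_S − 1 ≥ Σ_{i∈S}(|Γ_i| − 2)` for every nonempty `S ⊆ {1,…,d}`,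
where `e_S` is the number of connected components of `{Γ_i}_{i∈S}`. -/
theorem ddagger_iff_components (d : ℕ) (N : Finset ℕ) (Γ : ℕ → Finset ℕ)
    (hsub : ∀ i ∈ Finset.Icc 1 d, Γ i ⊆ N)
    (hcard : ∀ i ∈ Finset.Icc 1 d, 3 ≤ (Γ i).card) :
    (∀ S ⊆ Finset.Icc 1 d, S.Nonempty →
        (∑ i ∈ S, ((Γ i).card - 2)) + 2 ≤ (S.biUnion Γ).card) ↔
    (∀ S ⊆ Finset.Icc 1 d, S.Nonempty →
        (∑ i ∈ S, ((Γ i).card - 2)) + numComponents Γ S + 1 ≤ (S.biUnion Γ).card) :=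
  ddagger_iff_components_general d Γ
end

section
/- Let k be an infinite field and V a k-vector space of finite dimension r+1. Let U_1,…,U_s ⊆ V be linear subspaces with dim U_i = r − l_i where each l_i ≥ 1, such that U_i ⊄ U_s for every i < s, and such that dim(⋂_{i∈S} U_i) ≤ r − Σ_{i∈S} l_i for every nonempty S ⊆ {1,…,s}. Then there exists a linear hyperplane H ⊆ V (a subspace of dimension r) containing U_s such that dim(⋂_{i∈S}(U_i ∩ H)) ≤ (r−1) − Σ_{i∈S} l_i for every nonempty S ⊆ {1,…,s−1}. -/
/-!
If `⋂_{i∈S} U_i ⊆ U_s` for some `S ∌ s`, adjoining `s` to `S` leaves the intersection unchanged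
but raises `∑ l_i` by `l_s ≥ 1`, so the bound for `S` already holds with one to spare. Over an
infinite field the dual of `V ⧸ U_s` is not a finite union of proper subspaces, so some
hyperplane `H ⊇ U_s` contains none of the remaining intersections `⋂_{i∈S} U_i ⊄ U_s`, and
cutting each of them with `H` lowers its dimension by one.
-/

open Finset Module

section

variable {k : Type*} [Field k] {V : Type*} [AddCommGroup V] [Module k V] {ι : Type*} [Finite ι]

theorem Subspace.exists_forall_notMem_of_ne_top [Infinite k] {p : ι → Subspace k V}
    (hp : ∀ i, p i ≠ ⊤) : ∃ x, ∀ i, x ∉ p i := by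
  have hcover : ⋃ i, (p i : Set V) ≠ Set.univ := fun h ↦
    let ⟨i, hi⟩ := Subspace.exists_eq_top_of_iUnion_eq_univ h
    hp i hi
  obtain ⟨x, hx⟩ := (Set.ne_univ_iff_exists_notMem _).mp hcover
  exact ⟨x, fun i hi ↦ hx (Set.mem_iUnion.mpr ⟨i, hi⟩)⟩

theorem Module.Dual.exists_ne_zero_forall_apply_ne_zero [Infinite k] [Nontrivial V]
    {v : ι → V} (hv : ∀ i, v i ≠ 0) : ∃ φ : Dual k V, φ ≠ 0 ∧ ∀ i, φ (v i) ≠ 0 := by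
  let p : Option ι → Subspace k (Dual k V) :=
    fun o ↦ o.elim ⊥ fun i ↦ LinearMap.ker (Dual.eval k V (v i))
  have hp : ∀ o, p o ≠ ⊤ := by
    rintro (_ | i) h <;> rw [Submodule.eq_top_iff'] at h
    · obtain ⟨x, hx⟩ := exists_ne (0 : V)
      obtain ⟨φ, hφ⟩ := Projective.exists_dual_ne_zero k hx
      exact hφ (by simp [p] at h; simp [h φ])
    · obtain ⟨φ, hφ⟩ := Projective.exists_dual_ne_zero k (hv i)
      exact hφ (by simpa [p] using h φ)
  obtain ⟨φ, hφ⟩ := Subspace.exists_forall_notMem_of_ne_top hp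
  exact ⟨φ, by simpa [p] using hφ none, fun i ↦ by simpa [p] using hφ (some i)⟩

theorem Submodule.exists_dual_ne_zero_le_ker_forall_apply_ne_zero [Infinite k]
    {W : Submodule k V} (hW : W ≠ ⊤) {v : ι → V} (hv : ∀ i, v i ∉ W) :
    ∃ φ : Dual k V, φ ≠ 0 ∧ W ≤ LinearMap.ker φ ∧ ∀ i, φ (v i) ≠ 0 := by
  have : Nontrivial (V ⧸ W) := Submodule.Quotient.nontrivial_iff.mpr hW
  obtain ⟨ψ, hψ, hψv⟩ :=
    Dual.exists_ne_zero_forall_apply_ne_zero (k := k) (v := fun i ↦ W.mkQ (v i))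
      fun i ↦ (Submodule.Quotient.mk_eq_zero W).not.mpr (hv i)
  refine ⟨ψ.comp W.mkQ, fun h ↦ hψ ?_, ?_, hψv⟩
  · rwa [← LinearMap.zero_comp W.mkQ, LinearMap.cancel_right W.mkQ_surjective] at h
  · simpa only [Submodule.ker_mkQ] using LinearMap.ker_le_ker_comp W.mkQ ψ

theorem Submodule.exists_hyperplane_forall_not_le [Infinite k] [FiniteDimensional k V]
    {W : Submodule k V} (hW : W ≠ ⊤) {A : ι → Submodule k V} (hA : ∀ i, ¬ A i ≤ W) :
    ∃ H : Submodule k V, finrank k H + 1 = finrank k V ∧ W ≤ H ∧ ∀ i, ¬ A i ≤ H := by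
  choose v hvA hvW using fun i ↦ SetLike.not_le_iff_exists.mp (hA i)
  obtain ⟨φ, hφ, hWφ, hφv⟩ := exists_dual_ne_zero_le_ker_forall_apply_ne_zero hW hvW
  exact ⟨LinearMap.ker φ, φ.finrank_ker_add_one_of_ne_zero hφ, hWφ,
    fun i h ↦ hφv i (h (hvA i))⟩

end

theorem generic_hyperplane_step_general (k : Type*) [Field k] [Infinite k]
    (V : Type*) [AddCommGroup V] [Module k V]
    (r m : ℕ) (hV : Module.finrank k V = r + 1)
    (U : Fin (m + 1) → Submodule k V) (l : Fin (m + 1) → ℕ)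
    (hl : ∀ i, 1 ≤ l i)
    (hint : ∀ S : Finset (Fin (m + 1)), S.Nonempty →
      Module.finrank k ↥(⨅ i ∈ S, U i) + ∑ i ∈ S, l i ≤ r) :
    ∃ H : Submodule k V, Module.finrank k ↥H = r ∧ U (Fin.last m) ≤ H ∧
      ∀ S : Finset (Fin (m + 1)), S.Nonempty → Fin.last m ∉ S →
        Module.finrank k ↥(⨅ i ∈ S, U i ⊓ H) + ∑ i ∈ S, l i + 1 ≤ r := by
  classical
  have : FiniteDimensional k V := Module.finite_of_finrank_eq_succ hV
  have hlast_ne_top : U (Fin.last m) ≠ ⊤ := fun h ↦ by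
    have := hint {Fin.last m} (singleton_nonempty _)
    rw [Finset.iInf_singleton, sum_singleton, h, finrank_top, hV] at this
    omega
  obtain ⟨H, hH, hlastH, hnotH⟩ := Submodule.exists_hyperplane_forall_not_le hlast_ne_top
    (A := fun S : {S : Finset (Fin (m + 1)) // ¬ ⨅ i ∈ S, U i ≤ U (Fin.last m)} ↦ ⨅ i ∈ S.1, U i)
    Subtype.prop
  refine ⟨H, by omega, hlastH, fun S hS hlast ↦ ?_⟩
  rw [← biInf_inf hS]
  by_cases hS_le : ⨅ i ∈ S, U i ≤ U (Fin.last m)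
  · have hinsert := hint (insert (Fin.last m) S) (insert_nonempty _ _)
    rw [Finset.iInf_insert, inf_eq_right.mpr hS_le, sum_insert hlast] at hinsert
    have := Submodule.finrank_mono (inf_le_left : (⨅ i ∈ S, U i) ⊓ H ≤ ⨅ i ∈ S, U i)
    have := hl (Fin.last m)
    omega
  · have hS_not_le : ¬ ⨅ i ∈ S, U i ≤ H := hnotH ⟨S, hS_le⟩
    have := Submodule.finrank_lt_finrank_of_lt (inf_lt_left.mpr hS_not_le)
    have := hint S hS
    omega

/-- The generic-hyperplane induction step in the proof that a product of linear
projections is dominant. Let `k` be an infinite field and `V` a `k`-vector space of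
dimension `r+1`. Given linear subspaces `U_1,…,U_s` (here indexed by `Fin (m+1)`, with
the last index playing the role of `s`) with `dim U_i = r − l_i`, `l_i ≥ 1`,
`U_i ⊄ U_s` for `i ≠ s`, and `dim(⋂_{i∈S} U_i) ≤ r − Σ_{i∈S} l_i` for all nonempty
`S`, there is a hyperplane `H ⊇ U_s` with
`dim(⋂_{i∈S}(U_i ∩ H)) ≤ (r−1) − Σ_{i∈S} l_i` for every nonempty `S` not containing
the last index. -/
theorem generic_hyperplane_step (k : Type*) [Field k] [Infinite k]
    (V : Type*) [AddCommGroup V] [Module k V] [FiniteDimensional k V]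
    (r m : ℕ) (hV : Module.finrank k V = r + 1)
    (U : Fin (m + 1) → Submodule k V) (l : Fin (m + 1) → ℕ)
    (hl : ∀ i, 1 ≤ l i)
    (hdim : ∀ i, Module.finrank k ↥(U i) + l i = r)
    (hnsub : ∀ i, i ≠ Fin.last m → ¬ U i ≤ U (Fin.last m))
    (hint : ∀ S : Finset (Fin (m + 1)), S.Nonempty →
      Module.finrank k ↥(⨅ i ∈ S, U i) + ∑ i ∈ S, l i ≤ r) :
    ∃ H : Submodule k V, Module.finrank k ↥H = r ∧ U (Fin.last m) ≤ H ∧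
      ∀ S : Finset (Fin (m + 1)), S.Nonempty → Fin.last m ∉ S →
        Module.finrank k ↥(⨅ i ∈ S, U i ⊓ H) + ∑ i ∈ S, l i + 1 ≤ r :=
  generic_hyperplane_step_general k V r m hV U l hl hint
end

section
/- Let n ≥ 7 and let Γ_1,…,Γ_{n−2} be 3-element subsets of N = {1,…,n} satisfying condition (†), with Γ_{n−3} = {1,2,n} and Γ_{n−2} = {3,4,n}. Let Ñ = {a, b, 5, 6, …, n} and for each i ≤ n−4 let Γ̃_i ⊆ Ñ be obtained from Γ_i by replacing the elements 1 and 2 by a and the elements 3 and 4 by b. Then |⋃_{i∈S} Γ̃_i| ≥ |S| + 2 for every nonempty proper subset S ⊆ {1,…,n−4}. -/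
open Finset

/-!
Put `U = ⋃_{j∈S} Γ_j`. Contracting `1, 2 ↦ a` and `3, 4 ↦ b` loses one point of `U` for
each pair `{1, 2}`, `{3, 4}` that `U` contains. Adding to `S` the index `n - 3`, resp. `n - 2`,
of the triple `{1, 2, n}`, resp. `{3, 4, n}`, for each such pair enlarges the union by at most
the point `n`, so (†) applied to the enlarged index set pays for exactly those losses.
-/

def contractPairs (a b x : ℕ) : ℕ :=
  if x = 1 ∨ x = 2 then a else if x = 3 ∨ x = 4 then b else x

def numContractedPairs (U : Finset ℕ) : ℕ :=
  (if {1, 2} ⊆ U then 1 else 0) + (if {3, 4} ⊆ U then 1 else 0)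

theorem card_le_card_image_add_card_of_injOn_sdiff {α β : Type*} [DecidableEq α]
    [DecidableEq β] {f : α → β} {s t : Finset α} (h : Set.InjOn f ↑(s \ t)) :
    #s ≤ #(s.image f) + #t :=
  calc #s ≤ #(s \ t) + #t := card_le_card_sdiff_add_card
    _ = #((s \ t).image f) + #t := by rw [card_image_of_injOn h]
    _ ≤ #(s.image f) + #t := by gcongr; exact sdiff_subset

theorem card_le_card_image_contractPairs_add {a b : ℕ} {U : Finset ℕ} (hab : a ≠ b)
    (ha : a ∉ U \ {1, 2, 3, 4}) (hb : b ∉ U \ {1, 2, 3, 4}) :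
    #U ≤ #(U.image (contractPairs a b)) + numContractedPairs U := by
  -- `contractPairs a b` is injective on `U` once one point of each pair inside `U` is removed
  set D : Finset ℕ := (if {1, 2} ⊆ U then {2} else ∅) ∪ (if {3, 4} ⊆ U then {4} else ∅)
  have hD : #D ≤ numContractedPairs U :=
    (card_union_le _ _).trans (by unfold numContractedPairs; split_ifs <;> simp)
  have hinj : Set.InjOn (contractPairs a b) ↑(U \ D) := by
    intro x hx y hy hxy
    simp only [coe_sdiff, Set.mem_sdiff, mem_coe, D] at hx hy
    simp only [mem_sdiff, mem_insert, mem_singleton, not_and, not_or] at ha hb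
    unfold contractPairs at hxy
    split_ifs at hx hy hxy <;> grind
  have := card_le_card_image_add_card_of_injOn_sdiff hinj
  omega

section Hypergraph

variable {n : ℕ} {Γ : ℕ → Finset ℕ}

theorem card_add_two_le_of_biUnion_subset_insert
    (hdag : ∀ S ⊆ Icc 1 (n - 2), 2 ≤ #S → #S ≤ n - 3 → #S + 3 ≤ #(S.biUnion Γ))
    {T U : Finset ℕ} (hT : T ⊆ Icc 1 (n - 2)) (hT2 : 2 ≤ #T) (hTn : #T ≤ n - 3)
    (hTU : T.biUnion Γ ⊆ insert n U) : #T + 2 ≤ #U := by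
  have := hdag T hT hT2 hTn
  have := card_le_card hTU
  have := card_insert_le n U
  omega

theorem card_filter_subset_insert_eq_numContractedPairs (hn : 5 ≤ n)
    (h1 : Γ (n - 3) = {1, 2, n}) (h2 : Γ (n - 2) = {3, 4, n}) (U : Finset ℕ) :
    #(({n - 3, n - 2} : Finset ℕ).filter fun j => Γ j ⊆ insert n U) =
      numContractedPairs U := by
  rw [card_filter, sum_pair (by omega), h1, h2]
  simp [numContractedPairs, insert_subset_iff, show 1 ≠ n by omega, show 2 ≠ n by omega,
    show 3 ≠ n by omega, show 4 ≠ n by omega]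

theorem card_add_numContractedPairs_add_two_le_card_biUnion
    (hcard : ∀ j ∈ Icc 1 (n - 2), #(Γ j) = 3)
    (hdag : ∀ S ⊆ Icc 1 (n - 2), 2 ≤ #S → #S ≤ n - 3 → #S + 3 ≤ #(S.biUnion Γ))
    (h1 : Γ (n - 3) = {1, 2, n}) (h2 : Γ (n - 2) = {3, 4, n})
    {S : Finset ℕ} (hS : S ⊆ Icc 1 (n - 4)) (hSne : S.Nonempty) (hSn : #S < n - 4) :
    #S + numContractedPairs (S.biUnion Γ) + 2 ≤ #(S.biUnion Γ) := by
  set U := S.biUnion Γ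
  set E := ({n - 3, n - 2} : Finset ℕ).filter fun j => Γ j ⊆ insert n U
  have hE : #E = numContractedPairs U :=
    card_filter_subset_insert_eq_numContractedPairs (by omega) h1 h2 U
  have hE2 : #E ≤ 2 := (card_filter_le _ _).trans card_le_two
  have hSE : Disjoint S E := by
    refine disjoint_left.mpr fun j hjS hjE => ?_
    have := (mem_Icc.mp (hS hjS)).2
    simp only [E, mem_filter, mem_insert, mem_singleton] at hjE
    omega
  have hS2 : S ⊆ Icc 1 (n - 2) := hS.trans (Icc_subset_Icc_right (by omega))
  have hSE2 : S ∪ E ⊆ Icc 1 (n - 2) := by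
    refine union_subset hS2 fun j hj => ?_
    simp only [E, mem_filter, mem_insert, mem_singleton] at hj
    exact mem_Icc.mpr (by omega)
  have hEU : (S ∪ E).biUnion Γ ⊆ insert n U := by
    rw [union_biUnion]
    exact union_subset (subset_insert n U) (biUnion_subset.mpr fun j hj => (mem_filter.mp hj).2)
  have hT := card_union_of_disjoint hSE
  by_cases hT2 : 2 ≤ #(S ∪ E)
  · have := card_add_two_le_of_biUnion_subset_insert hdag hSE2 hT2 (by omega) hEU
    omega
  · obtain ⟨i, rfl⟩ : ∃ i, S = {i} := card_eq_one.mp (by have := hSne.card_pos; omega)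
    have hU : #U = 3 := by
      simp only [U, singleton_biUnion]
      exact hcard i (hS2 (mem_singleton_self i))
    rw [card_singleton] at hT ⊢
    omega

end Hypergraph

theorem contracted_hypergraph_ddagger_general (n : ℕ) (Γ : ℕ → Finset ℕ)
    (a b : ℕ)
    (hsub : ∀ j ∈ Finset.Icc 1 (n - 2), Γ j ⊆ Finset.Icc 1 n)
    (hcard : ∀ j ∈ Finset.Icc 1 (n - 2), (Γ j).card = 3)
    (hdag : ∀ S ⊆ Finset.Icc 1 (n - 2), 2 ≤ S.card → S.card ≤ n - 3 →
      S.card + 3 ≤ (S.biUnion Γ).card)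
    (h1 : Γ (n - 3) = {1, 2, n})
    (h2 : Γ (n - 2) = {3, 4, n})
    (hab : a ≠ b) (ha : a ∉ Finset.Icc 5 n) (hb : b ∉ Finset.Icc 5 n) :
    ∀ S ⊆ Finset.Icc 1 (n - 4), S.Nonempty → S ≠ Finset.Icc 1 (n - 4) →
      S.card + 2 ≤ (S.biUnion fun j => (Γ j).image fun x =>
        if x = 1 ∨ x = 2 then a else if x = 3 ∨ x = 4 then b else x).card := by
  intro S hS hSne hSproper
  rw [← biUnion_image]
  change #S + 2 ≤ #((S.biUnion Γ).image (contractPairs a b))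
  have hSn : #S < n - 4 := by simpa using card_lt_card (ssubset_of_subset_of_ne hS hSproper)
  have hU : S.biUnion Γ \ {1, 2, 3, 4} ⊆ Icc 5 n := by
    intro x hx
    obtain ⟨hxU, hx4⟩ := mem_sdiff.mp hx
    obtain ⟨j, hj, hxj⟩ := mem_biUnion.mp hxU
    have := mem_Icc.mp (hsub j (Icc_subset_Icc_right (by omega) (hS hj)) hxj)
    simp only [mem_insert, mem_singleton] at hx4
    exact mem_Icc.mpr ⟨by omega, this.2⟩
  have hcontract :=
    card_le_card_image_contractPairs_add hab (fun h => ha (hU h)) (fun h => hb (hU h))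
  have hpairs := card_add_numContractedPairs_add_two_le_card_biUnion hcard hdag h1 h2 hS hSne hSn
  omega

/-- Let `Γ_1,…,Γ_{n-2}` (n ≥ 7) be triples on `N = {1,…,n}` satisfying (†), with
`Γ_{n-3} = {1,2,n}` and `Γ_{n-2} = {3,4,n}`. Replacing `1, 2` by a new element `a` and
`3, 4` by a new element `b` in each of `Γ_1,…,Γ_{n-4}` produces triples `Γ̃_i` on
`Ñ = {a, b, 5, …, n}` with `|⋃_{i∈S} Γ̃_i| ≥ |S| + 2` for every nonempty proper subset
`S ⊆ {1,…,n-4}`. -/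
theorem contracted_hypergraph_ddagger (n : ℕ) (hn : 7 ≤ n) (Γ : ℕ → Finset ℕ)
    (a b : ℕ)
    (hsub : ∀ j ∈ Finset.Icc 1 (n - 2), Γ j ⊆ Finset.Icc 1 n)
    (hcard : ∀ j ∈ Finset.Icc 1 (n - 2), (Γ j).card = 3)
    (hdag : ∀ S ⊆ Finset.Icc 1 (n - 2), 2 ≤ S.card → S.card ≤ n - 3 →
      S.card + 3 ≤ (S.biUnion Γ).card)
    (h1 : Γ (n - 3) = {1, 2, n})
    (h2 : Γ (n - 2) = {3, 4, n})
    (hab : a ≠ b) (ha : a ∉ Finset.Icc 5 n) (hb : b ∉ Finset.Icc 5 n) :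
    ∀ S ⊆ Finset.Icc 1 (n - 4), S.Nonempty → S ≠ Finset.Icc 1 (n - 4) →
      S.card + 2 ≤ (S.biUnion fun j => (Γ j).image fun x =>
        if x = 1 ∨ x = 2 then a else if x = 3 ∨ x = 4 then b else x).card :=
  contracted_hypergraph_ddagger_general n Γ a b hsub hcard hdag h1 h2 hab ha hb
end

section
/- Let n ≥ 7 and let Γ_1,…,Γ_{n−2} be 3-element subsets of N = {1,…,n} satisfying condition (†), with Γ_{n−3} = {1,2,n} and Γ_{n−2} = {3,4,n}. Then for every subset S ⊆ {1,…,n−4} with 2 ≤ |S| ≤ n−5 and {1,2,3,4} ⊆ ⋃_{i∈S} Γ_i, one has |⋃_{i∈S} Γ_i| ≥ |S| + 4. -/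
open Finset

/-!
Adjoin the two hyperedges `Γ_{n-3} = {1,2,n}` and `Γ_{n-2} = {3,4,n}` to `S`. Since `1,2,3,4`
are already covered by `S`, the union grows by at most the single vertex `n`, while `S` grows
by two indices; condition (†) for the enlarged index set then gives the extra unit.
-/

theorem card_biUnion_union_le_of_subset_insert {ι α : Type*} [DecidableEq ι] [DecidableEq α]
    (Γ : ι → Finset α) (S T : Finset ι) (a : α) (h : T.biUnion Γ ⊆ insert a (S.biUnion Γ)) :
    ((S ∪ T).biUnion Γ).card ≤ (S.biUnion Γ).card + 1 := by
  rw [union_biUnion]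
  calc (S.biUnion Γ ∪ T.biUnion Γ).card ≤ (insert a (S.biUnion Γ)).card :=
        card_le_card (union_subset (subset_insert a _) h)
    _ ≤ (S.biUnion Γ).card + 1 := card_insert_le a _

theorem strengthened_dagger_general (n : ℕ) (Γ : ℕ → Finset ℕ)
    (hdag : ∀ S ⊆ Finset.Icc 1 (n - 2), 2 ≤ S.card → S.card ≤ n - 3 →
      S.card + 3 ≤ (S.biUnion Γ).card)
    (h1 : Γ (n - 3) = {1, 2, n})
    (h2 : Γ (n - 2) = {3, 4, n}) :
    ∀ S ⊆ Finset.Icc 1 (n - 4), 2 ≤ S.card → S.card ≤ n - 5 →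
      ({1, 2, 3, 4} : Finset ℕ) ⊆ S.biUnion Γ →
      S.card + 4 ≤ (S.biUnion Γ).card := by
  intro S hS hS2 hS5 h1234
  have hn : 6 ≤ n := by
    have := card_le_card hS
    rw [Nat.card_Icc] at this
    omega
  set T : Finset ℕ := {n - 3, n - 2}
  have hdisj : Disjoint S T := by
    rw [disjoint_right]
    intro j hjT hjS
    have := mem_Icc.mp (hS hjS)
    simp only [T, mem_insert, mem_singleton] at hjT
    omega
  have hcardST : (S ∪ T).card = S.card + 2 := by
    rw [card_union_of_disjoint hdisj, card_pair (by omega)]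
  have hST : S ∪ T ⊆ Icc 1 (n - 2) := by
    refine union_subset (hS.trans (Icc_subset_Icc_right (by omega))) ?_
    intro j hj
    simp only [T, mem_insert, mem_singleton] at hj
    rw [mem_Icc]
    omega
  have hT : T.biUnion Γ ⊆ insert n (S.biUnion Γ) := by
    simp only [insert_subset_iff, singleton_subset_iff] at h1234
    obtain ⟨m1, m2, m3, m4⟩ := h1234
    rw [biUnion_insert, singleton_biUnion, h1, h2]
    intro x hx
    simp only [mem_union, mem_insert, mem_singleton] at hx
    rcases hx with (rfl | rfl | rfl) | (rfl | rfl | rfl) <;> simp [*]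
  have hgrow := card_biUnion_union_le_of_subset_insert Γ S T n hT
  have hdagST := hdag (S ∪ T) hST (by omega) (by omega)
  omega

/-- Let `Γ_1,…,Γ_{n-2}` (n ≥ 7) be triples on `N = {1,…,n}` satisfying (†), with
`Γ_{n-3} = {1,2,n}` and `Γ_{n-2} = {3,4,n}`. Then for every `S ⊆ {1,…,n-4}` with
`2 ≤ |S| ≤ n-5` and `{1,2,3,4} ⊆ ⋃_{i∈S} Γ_i`, one has `|⋃_{i∈S} Γ_i| ≥ |S| + 4`. -/
theorem strengthened_dagger (n : ℕ) (hn : 7 ≤ n) (Γ : ℕ → Finset ℕ)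
    (hsub : ∀ j ∈ Finset.Icc 1 (n - 2), Γ j ⊆ Finset.Icc 1 n)
    (hcard : ∀ j ∈ Finset.Icc 1 (n - 2), (Γ j).card = 3)
    (hdag : ∀ S ⊆ Finset.Icc 1 (n - 2), 2 ≤ S.card → S.card ≤ n - 3 →
      S.card + 3 ≤ (S.biUnion Γ).card)
    (h1 : Γ (n - 3) = {1, 2, n})
    (h2 : Γ (n - 2) = {3, 4, n}) :
    ∀ S ⊆ Finset.Icc 1 (n - 4), 2 ≤ S.card → S.card ≤ n - 5 →
      ({1, 2, 3, 4} : Finset ℕ) ⊆ S.biUnion Γ →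
      S.card + 4 ≤ (S.biUnion Γ).card :=
  strengthened_dagger_general n Γ hdag h1 h2
end

section
/- Let n ≥ 6 and let Γ_1,…,Γ_{n−2} be 3-element subsets of N = {1,…,n} such that every element of N has valence 2 or 3 and condition (‡) holds. Let B be the set of the n−2 triples (black vertices) and W the set of valence-3 elements of N (white vertices), so |W| = n−6. For a subset Y ⊆ B ⊔ W let b(Y) = |Y ∩ B|, w(Y) = |Y ∩ W|, and let #(Y) be the number of valence-2 elements i of N whose two containing triples do not lie on the same side of the partition (Y, complement), plus the number of incidences (i, Γ_j) with i of valence 3 and i ∈ Γ_j such that exactly one of the white vertex i and the black vertex Γ_j lies in Y. Then for every Y with ∅ ≠ Y ≠ B ⊔ W: |(n−2)·w(Y) − (n−6)·b(Y)| < (n−4)·#(Y). -/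
/-! Let `d i` be the number of triples of `YB` containing `i`. Then `#(Y)` is a sum of local
contributions `c i`, and at every vertex `[i ∈ YW] + 2·[d i ≠ 0] ≤ c i + d i`. Summing, with
`∑ d i = 3 b(Y)` and (‡) applied to the triples of `YB`, gives `w(Y) + 4 ≤ #(Y) + b(Y)` when
`YB ≠ ∅`, whereas `#(Y) = 3 w(Y)` when `YB = ∅`; for proper `Y` either bound yields
`(n-2) w(Y) - (n-6) b(Y) < (n-4) #(Y)`. Passing to the complement of `Y` leaves `#` unchanged and,
as `|W| = n - 6` by counting incidences, negates the left-hand side: this is the other half of the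
absolute value. -/

open Finset
open scoped Classical

/-- `sharp n Γ YB YW` is `#(Y)` for `Y = (YB, YW)`: the number of valence-2 elements
whose two containing triples lie on different sides of the partition, plus the number
of incidences `(i, Γ_j)` with `i` of valence 3 and `i ∈ Γ_j` such that exactly one of
the white vertex `i` and the black vertex `Γ_j` lies in `Y`. -/
noncomputable def sharp (n : ℕ) (Γ : ℕ → Finset ℕ) (YB YW : Finset ℕ) : ℕ :=
  ((Finset.Icc 1 n).filter fun i => valence n Γ i = 2 ∧
      (∃ j ∈ Finset.Icc 1 (n - 2), i ∈ Γ j ∧ j ∈ YB) ∧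
      (∃ j ∈ Finset.Icc 1 (n - 2), i ∈ Γ j ∧ j ∉ YB)).card +
  (((Finset.Icc 1 n) ×ˢ (Finset.Icc 1 (n - 2))).filter fun p =>
      valence n Γ p.1 = 3 ∧ p.1 ∈ Γ p.2 ∧
      ((p.1 ∈ YW ∧ p.2 ∉ YB) ∨ (p.1 ∉ YW ∧ p.2 ∈ YB))).card

theorem Finset.card_add_card_lt_card_add_card {α β : Type*} {s S : Finset α} {t T : Finset β}
    (hs : s ⊆ S) (ht : t ⊆ T) (h : ¬(s = S ∧ t = T)) : #s + #t < #S + #T := by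
  have := card_le_card hs
  have := card_le_card ht
  by_contra! hle
  exact h ⟨eq_of_subset_of_card_le hs (by omega), eq_of_subset_of_card_le ht (by omega)⟩

section Degree

variable {ι α : Type*} [DecidableEq α] (Γ : ι → Finset α)

def degreeIn (S : Finset ι) (a : α) : ℕ := #{j ∈ S | a ∈ Γ j}

theorem degreeIn_add_degreeIn_sdiff [DecidableEq ι] {S T : Finset ι} (h : S ⊆ T) (a : α) :
    degreeIn Γ S a + degreeIn Γ (T \ S) a = degreeIn Γ T a := by
  rw [degreeIn, degreeIn, degreeIn, ← card_union_of_disjoint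
    (disjoint_filter_filter disjoint_sdiff), ← filter_union, union_sdiff_of_subset h]

theorem degreeIn_ne_zero_iff {S : Finset ι} {a : α} :
    degreeIn Γ S a ≠ 0 ↔ a ∈ S.biUnion Γ := by
  simp [degreeIn]

theorem sum_degreeIn {S : Finset ι} {I : Finset α} (h : ∀ j ∈ S, Γ j ⊆ I) :
    ∑ a ∈ I, degreeIn Γ S a = ∑ j ∈ S, #(Γ j) := by
  calc ∑ a ∈ I, degreeIn Γ S a = ∑ j ∈ S, #{a ∈ I | a ∈ Γ j} :=
        sum_card_bipartiteAbove_eq_sum_card_bipartiteBelow _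
    _ = ∑ j ∈ S, #(Γ j) :=
        sum_congr rfl fun j hj => by rw [filter_mem_eq_inter, inter_eq_right.2 (h j hj)]

end Degree

section Hypergraph

variable {n : ℕ} {Γ : ℕ → Finset ℕ} {YB YW : Finset ℕ}

noncomputable def sharpAt (n : ℕ) (Γ : ℕ → Finset ℕ) (YB YW : Finset ℕ) (i : ℕ) : ℕ :=
  (if valence n Γ i = 2 ∧ degreeIn Γ YB i = 1 then 1 else 0) +
    if valence n Γ i = 3 then
      if i ∈ YW then degreeIn Γ (Icc 1 (n - 2) \ YB) i else degreeIn Γ YB i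
    else 0

theorem degreeIn_add_degreeIn_compl (hYB : YB ⊆ Icc 1 (n - 2)) (i : ℕ) :
    degreeIn Γ YB i + degreeIn Γ (Icc 1 (n - 2) \ YB) i = valence n Γ i :=
  degreeIn_add_degreeIn_sdiff Γ hYB i

theorem sharp_eq_sum_sharpAt (hYB : YB ⊆ Icc 1 (n - 2)) :
    sharp n Γ YB YW = ∑ i ∈ Icc 1 n, sharpAt n Γ YB YW i := by
  rw [sharp, card_filter, card_filter, sum_product, ← sum_add_distrib]
  refine sum_congr rfl fun i _ => ?_
  have hdeg := degreeIn_add_degreeIn_compl (Γ := Γ) hYB i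
  have hin : (∃ j ∈ Icc 1 (n - 2), i ∈ Γ j ∧ j ∈ YB) ↔ degreeIn Γ YB i ≠ 0 := by
    rw [degreeIn_ne_zero_iff, mem_biUnion]
    exact ⟨fun ⟨j, _, hij, hj⟩ => ⟨j, hj, hij⟩, fun ⟨j, hj, hij⟩ => ⟨j, hYB hj, hij, hj⟩⟩
  have hout : (∃ j ∈ Icc 1 (n - 2), i ∈ Γ j ∧ j ∉ YB) ↔
      degreeIn Γ (Icc 1 (n - 2) \ YB) i ≠ 0 := by
    simp only [degreeIn_ne_zero_iff, mem_biUnion, mem_sdiff]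
    exact ⟨fun ⟨j, hj, hij, hjB⟩ => ⟨j, ⟨hj, hjB⟩, hij⟩, fun ⟨j, ⟨hj, hjB⟩, hij⟩ => ⟨j, hj, hij, hjB⟩⟩
  rw [sharpAt]
  congr 1
  · simp only [hin, hout]
    split_ifs <;> omega
  · rw [← card_filter]
    split_ifs with h3 hW
    · congr 1
      ext j
      simp only [mem_filter, mem_sdiff, h3, hW, true_and, not_true_eq_false, false_and, or_false]
      tauto
    · congr 1
      ext j
      have := @hYB j
      simp only [mem_filter, h3, hW, true_and, false_and, not_false_eq_true, false_or] at this ⊢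
      tauto
    · simp [h3]

theorem sharpAt_compl (hYB : YB ⊆ Icc 1 (n - 2)) {i : ℕ} (hi : i ∈ Icc 1 n) :
    sharpAt n Γ (Icc 1 (n - 2) \ YB) ({i ∈ Icc 1 n | valence n Γ i = 3} \ YW) i =
      sharpAt n Γ YB YW i := by
  have hdeg := degreeIn_add_degreeIn_compl (Γ := Γ) hYB i
  simp only [sharpAt, Finset.sdiff_sdiff_eq_self hYB, mem_sdiff, mem_filter, hi, true_and]
  by_cases hW : i ∈ YW <;> simp only [hW, not_true, not_false_eq_true, and_true, and_false,
    if_true, if_false] <;> split_ifs <;> omega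

theorem sharp_compl (hYB : YB ⊆ Icc 1 (n - 2)) :
    sharp n Γ (Icc 1 (n - 2) \ YB) ({i ∈ Icc 1 n | valence n Γ i = 3} \ YW) =
      sharp n Γ YB YW := by
  rw [sharp_eq_sum_sharpAt sdiff_subset, sharp_eq_sum_sharpAt hYB]
  exact sum_congr rfl fun i hi => sharpAt_compl hYB hi

theorem sharpAt_empty {i : ℕ} (hW : i ∈ YW → valence n Γ i = 3) :
    sharpAt n Γ ∅ YW i = if i ∈ YW then 3 else 0 := by
  have hd : degreeIn Γ ∅ i = 0 := rfl
  by_cases hiW : i ∈ YW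
  · have h3 : degreeIn Γ (Icc 1 (n - 2)) i = 3 := hW hiW
    simp only [sharpAt, hW hiW, Nat.succ_ne_self, hd, zero_ne_one, and_self, ↓reduceIte, hiW,
      sdiff_empty, h3, zero_add]
  · simp only [sharpAt, hd, zero_ne_one, and_false, ↓reduceIte, hiW, ite_self, add_zero]

theorem sharp_empty (hYW : YW ⊆ {i ∈ Icc 1 n | valence n Γ i = 3}) :
    sharp n Γ ∅ YW = 3 * #YW := by
  rw [sharp_eq_sum_sharpAt (empty_subset _),
    sum_congr rfl fun i _ => sharpAt_empty fun h => (mem_filter.1 (hYW h)).2, sum_ite_mem, inter_eq_right.2 (hYW.trans (filter_subset _ _)), sum_const, smul_eq_mul,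
    mul_comm]

theorem indicator_le_sharpAt_add_degreeIn (hYB : YB ⊆ Icc 1 (n - 2)) {i : ℕ}
    (hval : valence n Γ i = 2 ∨ valence n Γ i = 3) (hW : i ∈ YW → valence n Γ i = 3) :
    (if i ∈ YW then 1 else 0) + (if i ∈ YB.biUnion Γ then 2 else 0) ≤
      sharpAt n Γ YB YW i + degreeIn Γ YB i := by
  have hdeg := degreeIn_add_degreeIn_compl (Γ := Γ) hYB i
  simp only [← degreeIn_ne_zero_iff Γ, sharpAt]
  by_cases hiW : i ∈ YW
  · have := hW hiW
    split_ifs <;> omega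
  · split_ifs <;> omega

theorem sum_degreeIn_eq_three_mul (hsub : ∀ j ∈ Icc 1 (n - 2), Γ j ⊆ Icc 1 n)
    (hcard : ∀ j ∈ Icc 1 (n - 2), #(Γ j) = 3) {S : Finset ℕ} (hS : S ⊆ Icc 1 (n - 2)) :
    ∑ i ∈ Icc 1 n, degreeIn Γ S i = 3 * #S := by
  rw [sum_degreeIn Γ fun j hj => hsub j (hS hj), sum_const_nat fun j hj => hcard j (hS hj),
    mul_comm]

theorem card_add_two_mul_card_biUnion_le (hsub : ∀ j ∈ Icc 1 (n - 2), Γ j ⊆ Icc 1 n)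
    (hcard : ∀ j ∈ Icc 1 (n - 2), #(Γ j) = 3)
    (hval : ∀ i ∈ Icc 1 n, valence n Γ i = 2 ∨ valence n Γ i = 3)
    (hYB : YB ⊆ Icc 1 (n - 2)) (hYW : YW ⊆ {i ∈ Icc 1 n | valence n Γ i = 3}) :
    #YW + 2 * #(YB.biUnion Γ) ≤ sharp n Γ YB YW + 3 * #YB := by
  have hU : YB.biUnion Γ ⊆ Icc 1 n := biUnion_subset.2 fun j hj => hsub j (hYB hj)
  calc #YW + 2 * #(YB.biUnion Γ)
      = ∑ i ∈ Icc 1 n, ((if i ∈ YW then 1 else 0) + if i ∈ YB.biUnion Γ then 2 else 0) := by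
        rw [sum_add_distrib, sum_ite_mem, sum_ite_mem, inter_eq_right.2 hU,
          inter_eq_right.2 (hYW.trans (filter_subset _ _))]
        simp [mul_comm]
    _ ≤ ∑ i ∈ Icc 1 n, (sharpAt n Γ YB YW i + degreeIn Γ YB i) :=
        sum_le_sum fun i hi => indicator_le_sharpAt_add_degreeIn hYB (hval i hi)
          fun h => (mem_filter.1 (hYW h)).2
    _ = sharp n Γ YB YW + 3 * #YB := by
        rw [sum_add_distrib, ← sharp_eq_sum_sharpAt hYB,
          sum_degreeIn_eq_three_mul hsub hcard hYB]

theorem card_valence_eq_three (hsub : ∀ j ∈ Icc 1 (n - 2), Γ j ⊆ Icc 1 n)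
    (hcard : ∀ j ∈ Icc 1 (n - 2), #(Γ j) = 3)
    (hval : ∀ i ∈ Icc 1 n, valence n Γ i = 2 ∨ valence n Γ i = 3) :
    #{i ∈ Icc 1 n | valence n Γ i = 3} = n - 6 := by
  have htotal : ∑ i ∈ Icc 1 n, valence n Γ i = 3 * (n - 2) :=
    (sum_degreeIn_eq_three_mul hsub hcard subset_rfl).trans (by simp)
  have hsplit : ∑ i ∈ Icc 1 n, valence n Γ i =
      ∑ i ∈ Icc 1 n, (2 + if valence n Γ i = 3 then 1 else 0) :=
    sum_congr rfl fun i hi => by rcases hval i hi with h | h <;> simp [h]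
  rw [hsplit, sum_add_distrib, sum_boole] at htotal
  simp only [sum_const, Nat.card_Icc, add_tsub_cancel_right, smul_eq_mul, Nat.cast_id] at htotal
  omega

theorem sub_mul_card_lt_mul_sharp (hn : 6 ≤ n) (hsub : ∀ j ∈ Icc 1 (n - 2), Γ j ⊆ Icc 1 n)
    (hcard : ∀ j ∈ Icc 1 (n - 2), #(Γ j) = 3)
    (hval : ∀ i ∈ Icc 1 n, valence n Γ i = 2 ∨ valence n Γ i = 3)
    (hddag : ∀ S ⊆ Icc 1 (n - 2), S.Nonempty → #S + 2 ≤ #(S.biUnion Γ))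
    (hYB : YB ⊆ Icc 1 (n - 2)) (hYW : YW ⊆ {i ∈ Icc 1 n | valence n Γ i = 3})
    (hpos : 0 < #YB + #YW) (hlt : #YB + #YW < n - 2 + (n - 6)) :
    ((n : ℤ) - 2) * #YW - ((n : ℤ) - 6) * #YB < ((n : ℤ) - 4) * sharp n Γ YB YW := by
  have hn' : (6 : ℤ) ≤ n := by exact_mod_cast hn
  rcases YB.eq_empty_or_nonempty with rfl | hYBne
  · have hw : (1 : ℤ) ≤ #YW := by
      rw [card_empty, zero_add] at hpos
      exact_mod_cast hpos
    rw [sharp_empty hYW]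
    push_cast
    nlinarith
  · have hkey : (#YW : ℤ) + 4 ≤ sharp n Γ YB YW + #YB := by
      have := hddag YB hYB hYBne
      have := card_add_two_mul_card_biUnion_le hsub hcard hval hYB hYW
      omega
    have hlt' : (#YB : ℤ) + #YW + 9 ≤ 2 * n := by omega
    nlinarith

end Hypergraph

/-- Gieseker's basic inequality for the stable hypergraph curve: for a 3-uniform
hypergraph `Γ_1,…,Γ_{n-2}` on `{1,…,n}` with all valences 2 or 3 satisfying (‡), and
for every subset `Y = (YB, YW)` of the black and white vertices with
`∅ ≠ Y ≠ B ⊔ W`, one has `|(n−2)·w(Y) − (n−6)·b(Y)| < (n−4)·#(Y)`. -/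
theorem gieseker_strict_inequality (n : ℕ) (hn : 6 ≤ n) (Γ : ℕ → Finset ℕ)
    (hsub : ∀ j ∈ Finset.Icc 1 (n - 2), Γ j ⊆ Finset.Icc 1 n)
    (hcard : ∀ j ∈ Finset.Icc 1 (n - 2), (Γ j).card = 3)
    (hval : ∀ i ∈ Finset.Icc 1 n, valence n Γ i = 2 ∨ valence n Γ i = 3)
    (hddag : ∀ S ⊆ Finset.Icc 1 (n - 2), S.Nonempty →
      S.card + 2 ≤ (S.biUnion Γ).card)
    (YB YW : Finset ℕ)
    (hYB : YB ⊆ Finset.Icc 1 (n - 2))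
    (hYW : YW ⊆ (Finset.Icc 1 n).filter fun i => valence n Γ i = 3)
    (hne : ¬(YB = ∅ ∧ YW = ∅))
    (hne' : ¬(YB = Finset.Icc 1 (n - 2) ∧
      YW = (Finset.Icc 1 n).filter fun i => valence n Γ i = 3)) :
    |((n : ℤ) - 2) * YW.card - ((n : ℤ) - 6) * YB.card| <
      ((n : ℤ) - 4) * sharp n Γ YB YW := by
  have hW := card_valence_eq_three hsub hcard hval
  have hB : #(Icc 1 (n - 2)) = n - 2 := by simp
  have hb := hB ▸ card_le_card hYB
  have hw := hW ▸ card_le_card hYW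
  have hlt := hB ▸ hW ▸ card_add_card_lt_card_add_card hYB hYW hne'
  have hpos : 0 < #YB + #YW :=
    Nat.pos_of_ne_zero fun h => hne ⟨card_eq_zero.1 (by omega), card_eq_zero.1 (by omega)⟩
  have hcompl := sub_mul_card_lt_mul_sharp hn hsub hcard hval hddag sdiff_subset sdiff_subset
    (by rw [card_sdiff_of_subset hYB, card_sdiff_of_subset hYW]; omega)
    (by rw [card_sdiff_of_subset hYB, card_sdiff_of_subset hYW]; omega)
  rw [sharp_compl hYB, card_sdiff_of_subset hYB, card_sdiff_of_subset hYW, hB, hW,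
    Nat.cast_sub hb, Nat.cast_sub hw, Nat.cast_sub (by omega : 2 ≤ n),
    Nat.cast_sub hn] at hcompl
  rw [abs_lt]
  refine ⟨by push_cast at hcompl; linarith, ?_⟩
  exact sub_mul_card_lt_mul_sharp hn hsub hcard hval hddag hYB hYW hpos hlt
end

section
/- Let n ≥ 6 and let Γ_1,…,Γ_{n−2} be 3-element subsets of N = {1,…,n} such that every element of N has valence 2 or 3 and both conditions (‡) and (†) hold. Let Π be the dual graph of Γ (a simple graph, since under (†) two triples share at most one vertex). Let e be an edge of Π, let L be a black endpoint of e, and let Π̂ be obtained from Π by subdividing e with a new vertex Z (replacing e by a path of two edges through Z). For Y a subset of the vertices of Π̂, let b(Y) and w(Y) be the numbers of black resp. white vertices of Π lying in Y, let #(Y) be the number of edges of Π̂ with exactly one endpoint in Y, and set ε(Y) = 1 if L ∈ Y and Z ∉ Y, ε(Y) = −1 if Z ∈ Y and L ∉ Y, and ε(Y) = 0 otherwise. Then for every Y with ∅ ≠ Y ≠ V(Π̂): (n−2)·w(Y) − (n−6)·b(Y) + (2n−8)·ε(Y) ≤ (n−4)·#(Y). -/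
open Finset
open scoped Classical

/-- Adjacency in the dual graph `Π` of `Γ`: vertices are the triples (black,
`Sum.inl j` for `j ∈ {1,…,n-2}`) and the valence-3 elements of `N` (white,
`Sum.inr i`); a black vertex `Γ_j` is joined to a white vertex `i` whenever `i ∈ Γ_j`,
and two distinct black vertices are joined whenever they share a valence-2 element. -/
def piAdj (n : ℕ) (Γ : ℕ → Finset ℕ) (x y : ℕ ⊕ ℕ) : Prop :=
  (∃ j i, ((x = Sum.inl j ∧ y = Sum.inr i) ∨ (x = Sum.inr i ∧ y = Sum.inl j)) ∧
      j ∈ Finset.Icc 1 (n - 2) ∧ valence n Γ i = 3 ∧ i ∈ Γ j) ∨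
  (∃ j j', x = Sum.inl j ∧ y = Sum.inl j' ∧ j ≠ j' ∧
      j ∈ Finset.Icc 1 (n - 2) ∧ j' ∈ Finset.Icc 1 (n - 2) ∧
      ∃ i, valence n Γ i = 2 ∧ i ∈ Γ j ∧ i ∈ Γ j')

/-- Adjacency in the graph `Π̂` obtained from `Π` by subdividing the edge `{L, v}`
with a new vertex `Z = Sum.inr ()`: the edge `{L, v}` is removed and `Z` is joined to
both `L` and `v`. -/
def hatAdj (n : ℕ) (Γ : ℕ → Finset ℕ) (L v : ℕ ⊕ ℕ)
    (x y : (ℕ ⊕ ℕ) ⊕ Unit) : Prop :=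
  (∃ a b, x = Sum.inl a ∧ y = Sum.inl b ∧ piAdj n Γ a b ∧
      ¬((a = L ∧ b = v) ∨ (a = v ∧ b = L))) ∨
  (∃ a, ((x = Sum.inl a ∧ y = Sum.inr ()) ∨ (x = Sum.inr () ∧ y = Sum.inl a)) ∧
      (a = L ∨ a = v))

/-- The vertex set of `Π̂`. -/
def hatVertexSet (n : ℕ) (Γ : ℕ → Finset ℕ) : Set ((ℕ ⊕ ℕ) ⊕ Unit) :=
  {x | (∃ j ∈ Finset.Icc 1 (n - 2), x = Sum.inl (Sum.inl j)) ∨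
       (∃ i, valence n Γ i = 3 ∧ x = Sum.inl (Sum.inr i)) ∨ x = Sum.inr ()}

/-- `#(Y)`: the number of edges of `Π̂` with exactly one endpoint in `Y`, counted as
ordered pairs `(p₁, p₂)` of adjacent vertices with `p₁ ∈ Y` and `p₂ ∉ Y`. -/
noncomputable def edgeBoundary (n : ℕ) (Γ : ℕ → Finset ℕ) (L v : ℕ ⊕ ℕ)
    (Y : Set ((ℕ ⊕ ℕ) ⊕ Unit)) : ℕ :=
  Set.ncard {p : ((ℕ ⊕ ℕ) ⊕ Unit) × ((ℕ ⊕ ℕ) ⊕ Unit) |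
    hatAdj n Γ L v p.1 p.2 ∧ p.1 ∈ Y ∧ p.2 ∉ Y}

/-- `ε(Y)`: `1` if `L ∈ Y` and `Z ∉ Y`, `−1` if `Z ∈ Y` and `L ∉ Y`, `0` otherwise. -/
noncomputable def eps (L : ℕ ⊕ ℕ) (Y : Set ((ℕ ⊕ ℕ) ⊕ Unit)) : ℤ :=
  if Sum.inl L ∈ Y ∧ (Sum.inr () : (ℕ ⊕ ℕ) ⊕ Unit) ∉ Y then 1
  else if (Sum.inr () : (ℕ ⊕ ℕ) ⊕ Unit) ∈ Y ∧ Sum.inl L ∉ Y then -1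
  else 0


/-!
Subdividing the edge `{L, v}` changes the cut of `Y` only through the edges `Lv`, `LZ`, `Zv`,
so everything reduces to the cut of `Y ∩ Π` in `Π`. Every vertex of `Π` has degree at least 3,
so this cut is at least `3 (b + w)` minus the number of ordered pairs of adjacent vertices inside
`Y`. Those pairs are charged to incidences: two for every white element of `Y` in a triple of `Y`,
`m (m - 1)` for a valence-2 element lying in `m` triples of `Y`. Comparing incidences with the
size of the union of the triples, (‡) and (†) bound this by `2w + 4b - 4` resp. `2w + 4b - 6`;
when all triples lie in `Y` the bound `6w + 12` (exactly six elements have valence 2) is used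
instead. The inequality then follows by arithmetic in the cases
`b = 0`, `b = 1`, `2 ≤ b ≤ n - 3`, `b = n - 2`.
-/

namespace Gieseker

section Cut

variable {α β : Type*}

def cutSet (R : α → α → Prop) (Y : Set α) : Set (α × α) :=
  {p | R p.1 p.2 ∧ p.1 ∈ Y ∧ p.2 ∉ Y}

def innerSet (R : α → α → Prop) (Y : Set α) : Set (α × α) :=
  {p | R p.1 p.2 ∧ p.1 ∈ Y ∧ p.2 ∈ Y}

def edgeRel (x y : α) (a b : α) : Prop :=
  (a = x ∧ b = y) ∨ (a = y ∧ b = x)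

def subdivAdj (R : α → α → Prop) (L v : α) : α ⊕ Unit → α ⊕ Unit → Prop :=
  Relation.Map (fun a b => R a b ∧ ¬edgeRel L v a b) Sum.inl Sum.inl ⊔
    (edgeRel (Sum.inl L) (Sum.inr ()) ⊔ edgeRel (Sum.inr ()) (Sum.inl v))

lemma encard_cutSet_sup {R S : α → α → Prop} (h : ∀ a b, R a b → ¬S a b) (Y : Set α) :
    (cutSet (R ⊔ S) Y).encard = (cutSet R Y).encard + (cutSet S Y).encard := by
  rw [← Set.encard_union_eq]
  · congr 1
    ext p
    simp only [cutSet, Pi.sup_apply, sup_Prop_eq, Set.mem_ofPred_eq, Set.mem_union]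
    tauto
  · exact Set.disjoint_left.2 fun p hR hS => h _ _ hR.1 hS.1

lemma encard_cutSet_map (R : α → α → Prop) {f : α → β} (hf : Function.Injective f)
    (Y : Set β) : (cutSet (Relation.Map R f f) Y).encard = (cutSet R (f ⁻¹' Y)).encard := by
  rw [← (hf.prodMap hf).encard_image]
  congr 1
  ext ⟨x, y⟩
  simp only [cutSet, Relation.Map, Set.mem_ofPred_eq, Set.mem_image, Prod.exists, Prod.map,
    Prod.mk.injEq, Set.mem_preimage]
  constructor
  · rintro ⟨⟨a, b, hab, rfl, rfl⟩, hx, hy⟩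
    exact ⟨a, b, ⟨hab, hx, hy⟩, rfl, rfl⟩
  · rintro ⟨a, b, ⟨hab, hx, hy⟩, rfl, rfl⟩
    exact ⟨⟨a, b, hab, rfl, rfl⟩, hx, hy⟩

lemma encard_cutSet_edgeRel {x y : α} (hxy : x ≠ y) (Y : Set α) :
    (cutSet (edgeRel x y) Y).encard = if (x ∈ Y ↔ y ∈ Y) then 0 else 1 := by
  split_ifs with h
  · rw [Set.encard_eq_zero]
    ext ⟨a, b⟩
    simp only [cutSet, edgeRel, Set.mem_ofPred_eq]
    grind
  · rw [Set.encard_eq_one]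
    by_cases hx : x ∈ Y
    · refine ⟨(x, y), Set.ext fun ⟨a, b⟩ => ?_⟩
      simp only [cutSet, edgeRel, Set.mem_ofPred_eq]
      grind
    · refine ⟨(y, x), Set.ext fun ⟨a, b⟩ => ?_⟩
      simp only [cutSet, edgeRel, Set.mem_ofPred_eq]
      grind

lemma encard_cutSet_subdivAdj {R : α → α → Prop} {L v : α} (hLv : L ≠ v)
    (hR : ∀ a b, edgeRel L v a b → R a b) (Y : Set (α ⊕ Unit)) :
    (cutSet (subdivAdj R L v) Y).encard + (if (Sum.inl L ∈ Y ↔ Sum.inl v ∈ Y) then 0 else 1) =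
      (cutSet R (Sum.inl ⁻¹' Y)).encard + (if (Sum.inl L ∈ Y ↔ Sum.inr () ∈ Y) then 0 else 1) +
        (if (Sum.inr () ∈ Y ↔ Sum.inl v ∈ Y) then 0 else 1) := by
  have hsplit : R = (fun a b => R a b ∧ ¬edgeRel L v a b) ⊔ edgeRel L v := by
    ext a b
    simp only [Pi.sup_apply, sup_Prop_eq]
    by_cases h : edgeRel L v a b <;> simp [h, hR a b]
  rw [subdivAdj, encard_cutSet_sup, encard_cutSet_sup, encard_cutSet_map _ Sum.inl_injective,
    encard_cutSet_edgeRel Sum.inl_ne_inr, encard_cutSet_edgeRel Sum.inr_ne_inl]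
  nth_rewrite 2 [hsplit]
  rw [encard_cutSet_sup, encard_cutSet_edgeRel hLv]
  · simp only [Set.mem_preimage]
    ring
  all_goals
    intro a b
    simp only [Relation.Map, edgeRel, Pi.sup_apply, sup_Prop_eq]
    grind

lemma ncard_cutSet_subdivAdj {R : α → α → Prop} {L v : α} (hLv : L ≠ v)
    (hR : ∀ a b, edgeRel L v a b → R a b) (Y : Set (α ⊕ Unit))
    (hfin : (cutSet R (Sum.inl ⁻¹' Y)).Finite) :
    (cutSet (subdivAdj R L v) Y).ncard + (if (Sum.inl L ∈ Y ↔ Sum.inl v ∈ Y) then 0 else 1) =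
      (cutSet R (Sum.inl ⁻¹' Y)).ncard + (if (Sum.inl L ∈ Y ↔ Sum.inr () ∈ Y) then 0 else 1) +
        (if (Sum.inr () ∈ Y ↔ Sum.inl v ∈ Y) then 0 else 1) := by
  have h := encard_cutSet_subdivAdj hLv hR Y
  have hfin' : (cutSet (subdivAdj R L v) Y).Finite := by
    rw [← Set.encard_ne_top_iff]
    intro htop
    rw [htop, top_add] at h
    split_ifs at h <;> simp [Set.encard_ne_top_iff.2 hfin, eq_comm] at h
  rw [← hfin.cast_ncard_eq, ← hfin'.cast_ncard_eq] at h
  exact_mod_cast h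

lemma mul_card_le_ncard_cutSet_add_ncard_innerSet {R : α → α → Prop} {V A : Finset α}
    (hR : ∀ a b, R a b → a ∈ V ∧ b ∈ V) {Y : Set α} (hA : ∀ a ∈ A, a ∈ Y) {k : ℕ}
    (hdeg : ∀ a ∈ A, k ≤ #{b ∈ V | R a b}) :
    k * #A ≤ (cutSet R Y).ncard + (innerSet R Y).ncard := by
  have hsub : ↑{p ∈ A ×ˢ V | R p.1 p.2} ⊆ cutSet R Y ∪ innerSet R Y := by
    intro p hp
    simp only [coe_filter, mem_product, Set.mem_ofPred_eq] at hp
    by_cases hp2 : p.2 ∈ Y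
    · exact Or.inr ⟨hp.2, hA _ hp.1.1, hp2⟩
    · exact Or.inl ⟨hp.2, hA _ hp.1.1, hp2⟩
  have hfin : (cutSet R Y ∪ innerSet R Y).Finite :=
    (V ×ˢ V).finite_toSet.subset fun p hp => by simpa using hR _ _ (hp.elim (·.1) (·.1))
  calc k * #A = #A • k := by rw [smul_eq_mul, mul_comm]
    _ ≤ ∑ a ∈ A, #{b ∈ V | R a b} := card_nsmul_le_sum _ _ _ hdeg
    _ = #{p ∈ A ×ˢ V | R p.1 p.2} := by simp only [card_filter, sum_product]
    _ ≤ (cutSet R Y ∪ innerSet R Y).ncard := by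
      rw [← Set.ncard_coe_finset]
      exact Set.ncard_le_ncard hsub hfin
    _ ≤ (cutSet R Y).ncard + (innerSet R Y).ncard := Set.ncard_union_le _ _

end Cut

structure TripleSystem (n : ℕ) (Γ : ℕ → Finset ℕ) : Prop where
  subset : ∀ j ∈ Icc 1 (n - 2), Γ j ⊆ Icc 1 n
  card_eq : ∀ j ∈ Icc 1 (n - 2), #(Γ j) = 3
  valence_eq : ∀ i ∈ Icc 1 n, valence n Γ i = 2 ∨ valence n Γ i = 3

def valenceIn (Γ : ℕ → Finset ℕ) (S : Finset ℕ) (i : ℕ) : ℕ := #{j ∈ S | i ∈ Γ j}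

def bivalent (n : ℕ) (Γ : ℕ → Finset ℕ) : Finset ℕ := {i ∈ Icc 1 n | valence n Γ i = 2}

def trivalent (n : ℕ) (Γ : ℕ → Finset ℕ) : Finset ℕ := {i ∈ Icc 1 n | valence n Γ i = 3}

lemma sum_valenceIn_eq_sum_card (Γ : ℕ → Finset ℕ) {S T : Finset ℕ} (h : ∀ j ∈ S, Γ j ⊆ T) :
    ∑ i ∈ T, valenceIn Γ S i = ∑ j ∈ S, #(Γ j) :=
  calc ∑ i ∈ T, valenceIn Γ S i = ∑ j ∈ S, #(T.bipartiteAbove (fun j i => i ∈ Γ j) j) :=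
        (sum_card_bipartiteAbove_eq_sum_card_bipartiteBelow _).symm
    _ = ∑ j ∈ S, #(Γ j) := sum_congr rfl fun j hj => by
        rw [bipartiteAbove, filter_mem_eq_inter, inter_eq_right.2 (h j hj)]

lemma sum_valenceIn_sub_one_add_card_biUnion (Γ : ℕ → Finset ℕ) {S T : Finset ℕ}
    (h : ∀ j ∈ S, Γ j ⊆ T) :
    ∑ i ∈ T, (valenceIn Γ S i - 1) + #(S.biUnion Γ) = ∑ j ∈ S, #(Γ j) := by
  have hU : S.biUnion Γ = {i ∈ T | 0 < valenceIn Γ S i} := by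
    ext i
    simp only [mem_biUnion, mem_filter, valenceIn, card_pos, filter_nonempty_iff]
    exact ⟨fun ⟨j, hj, hi⟩ => ⟨h j hj hi, j, hj, hi⟩, fun ⟨_, hS⟩ => hS⟩
  rw [← sum_valenceIn_eq_sum_card Γ h, hU, card_filter, ← sum_add_distrib]
  refine sum_congr rfl fun i _ => ?_
  split_ifs <;> omega

variable {n : ℕ} {Γ : ℕ → Finset ℕ}

lemma valence_eq_valenceIn : valence n Γ = valenceIn Γ (Icc 1 (n - 2)) := rfl

lemma valenceIn_le_valence {S : Finset ℕ} (hS : S ⊆ Icc 1 (n - 2)) (i : ℕ) :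
    valenceIn Γ S i ≤ valence n Γ i :=
  card_le_card (filter_subset_filter _ hS)

namespace TripleSystem

lemma mem_Icc_of_valence_pos (hΓ : TripleSystem n Γ) {i : ℕ} (h : 0 < valence n Γ i) :
    i ∈ Icc 1 n := by
  obtain ⟨j, hj⟩ := card_pos.1 h
  rw [mem_filter] at hj
  exact hΓ.subset j hj.1 hj.2

lemma card_valence_two_add_card_valence_three (hΓ : TripleSystem n Γ) {T : Finset ℕ}
    (hT : T ⊆ Icc 1 n) :
    #{i ∈ T | valence n Γ i = 2} + #{i ∈ T | valence n Γ i = 3} = #T := by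
  rw [← card_filter_add_card_filter_not (s := T) (fun i => valence n Γ i = 2)]
  congr 2
  refine filter_congr fun i hi => ?_
  rcases hΓ.valence_eq i (hT hi) with h | h <;> simp [h]

lemma card_bivalent_add_card_trivalent (hΓ : TripleSystem n Γ) :
    #(bivalent n Γ) + #(trivalent n Γ) = n := by
  rw [bivalent, trivalent, hΓ.card_valence_two_add_card_valence_three subset_rfl, Nat.card_Icc]
  omega

lemma card_trivalent_add_six (hΓ : TripleSystem n Γ) (hn : 2 ≤ n) :
    #(trivalent n Γ) + 6 = n := by
  have hsum : ∑ i ∈ Icc 1 n, valence n Γ i = 3 * (n - 2) := by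
    rw [valence_eq_valenceIn, sum_valenceIn_eq_sum_card Γ hΓ.subset, sum_congr rfl hΓ.card_eq,
      sum_const, Nat.card_Icc, smul_eq_mul]
    omega
  have hsplit : ∑ i ∈ Icc 1 n, valence n Γ i = 2 * n + #(trivalent n Γ) := by
    rw [sum_congr rfl fun i hi => show valence n Γ i = 2 + if valence n Γ i = 3 then 1 else 0 by
      rcases hΓ.valence_eq i hi with h | h <;> simp [h]]
    rw [sum_add_distrib, sum_const, Nat.card_Icc, smul_eq_mul, sum_boole, trivalent, Nat.cast_id]
    omega
  omega

lemma card_bivalent (hΓ : TripleSystem n Γ) (hn : 2 ≤ n) : #(bivalent n Γ) = 6 := by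
  have := hΓ.card_bivalent_add_card_trivalent
  have := hΓ.card_trivalent_add_six hn
  omega

lemma card_inter_le_one (hΓ : TripleSystem n Γ) (hn : 5 ≤ n)
    (hdag : ∀ S ⊆ Icc 1 (n - 2), 2 ≤ #S → #S ≤ n - 3 → #S + 3 ≤ #(S.biUnion Γ))
    {j j' : ℕ} (hj : j ∈ Icc 1 (n - 2)) (hj' : j' ∈ Icc 1 (n - 2)) (hne : j ≠ j') :
    #(Γ j ∩ Γ j') ≤ 1 := by
  have h := hdag {j, j'} (insert_subset hj (singleton_subset_iff.2 hj'))
    (by rw [card_pair hne]) (by rw [card_pair hne]; omega)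
  rw [card_pair hne, biUnion_insert, singleton_biUnion] at h
  have := card_union_add_card_inter (Γ j) (Γ j')
  rw [hΓ.card_eq j hj, hΓ.card_eq j' hj'] at this
  omega

end TripleSystem

def piVertices (n : ℕ) (Γ : ℕ → Finset ℕ) : Finset (ℕ ⊕ ℕ) :=
  (Icc 1 (n - 2)).disjSum (trivalent n Γ)

lemma piAdj_symm {a b : ℕ ⊕ ℕ} (h : piAdj n Γ a b) : piAdj n Γ b a := by
  rcases h with ⟨j, i, hab, hj, hi, hij⟩ | ⟨j, j', rfl, rfl, hne, hj, hj', i, hi, hij, hij'⟩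
  · exact Or.inl ⟨j, i, hab.symm.imp And.symm And.symm, hj, hi, hij⟩
  · exact Or.inr ⟨j', j, rfl, rfl, hne.symm, hj', hj, i, hi, hij', hij⟩

lemma ne_of_piAdj {a b : ℕ ⊕ ℕ} (h : piAdj n Γ a b) : a ≠ b := by
  rcases h with ⟨j, i, ⟨rfl, rfl⟩ | ⟨rfl, rfl⟩, -⟩ | ⟨j, j', rfl, rfl, hne, -⟩
  · exact Sum.inl_ne_inr
  · exact Sum.inr_ne_inl
  · exact fun h => hne (Sum.inl_injective h)

lemma hatAdj_eq_subdivAdj (L v : ℕ ⊕ ℕ) : hatAdj n Γ L v = subdivAdj (piAdj n Γ) L v := by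
  ext x y
  simp only [hatAdj, subdivAdj, Relation.Map, edgeRel, Pi.sup_apply, sup_Prop_eq]
  constructor
  · rintro (⟨a, b, rfl, rfl, hab, hne⟩ | ⟨a, hxy, rfl | rfl⟩)
    · exact Or.inl ⟨a, b, ⟨hab, hne⟩, rfl, rfl⟩
    all_goals rcases hxy with ⟨rfl, rfl⟩ | ⟨rfl, rfl⟩ <;> simp
  · rintro (⟨a, b, ⟨hab, hne⟩, rfl, rfl⟩ | (⟨rfl, rfl⟩ | ⟨rfl, rfl⟩) | (⟨rfl, rfl⟩ | ⟨rfl, rfl⟩))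
    · exact Or.inl ⟨a, b, rfl, rfl, hab, hne⟩
    all_goals simp

lemma three_le_card_piAdj_inr {i : ℕ} (hi : i ∈ trivalent n Γ) :
    3 ≤ #{b ∈ piVertices n Γ | piAdj n Γ (Sum.inr i) b} := by
  have hsub : {j ∈ Icc 1 (n - 2) | i ∈ Γ j}.map Function.Embedding.inl ⊆
      {b ∈ piVertices n Γ | piAdj n Γ (Sum.inr i) b} := by
    intro b hb
    simp only [mem_map, mem_filter, Function.Embedding.inl_apply] at hb
    obtain ⟨j, ⟨hj, hij⟩, rfl⟩ := hb
    exact mem_filter.2 ⟨by simp [piVertices, hj],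
      Or.inl ⟨j, i, Or.inr ⟨rfl, rfl⟩, hj, (mem_filter.1 hi).2, hij⟩⟩
  calc 3 = valence n Γ i := (mem_filter.1 hi).2.symm
    _ = #({j ∈ Icc 1 (n - 2) | i ∈ Γ j}.map Function.Embedding.inl) := (card_map _).symm
    _ ≤ _ := card_le_card hsub

namespace TripleSystem

lemma mem_piVertices_of_piAdj (hΓ : TripleSystem n Γ) {a b : ℕ ⊕ ℕ} (h : piAdj n Γ a b) :
    a ∈ piVertices n Γ ∧ b ∈ piVertices n Γ := by
  rcases h with ⟨j, i, hab, hj, hi, hij⟩ | ⟨j, j', rfl, rfl, -, hj, hj', -⟩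
  · have : i ∈ trivalent n Γ := mem_filter.2 ⟨hΓ.subset j hj hij, hi⟩
    rcases hab with ⟨rfl, rfl⟩ | ⟨rfl, rfl⟩ <;> simp [piVertices, hj, this]
  · simp [piVertices, hj, hj']

/-- The other triples through the valence-2 elements of `Γ j` are neighbours of `Γ j`, and by (†)
for pairs they are distinct. -/
lemma three_le_card_piAdj_inl (hΓ : TripleSystem n Γ) (hn : 5 ≤ n)
    (hdag : ∀ S ⊆ Icc 1 (n - 2), 2 ≤ #S → #S ≤ n - 3 → #S + 3 ≤ #(S.biUnion Γ))
    {j : ℕ} (hj : j ∈ Icc 1 (n - 2)) :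
    3 ≤ #{b ∈ piVertices n Γ | piAdj n Γ (Sum.inl j) b} := by
  set B := {j' ∈ Icc 1 (n - 2) | piAdj n Γ (Sum.inl j) (Sum.inl j')}
  have hcover : {i ∈ Γ j | valence n Γ i = 2} ⊆ B.biUnion fun j' => Γ j ∩ Γ j' := by
    intro i hi
    rw [mem_filter] at hi
    obtain ⟨j', hj', hne⟩ := exists_mem_ne (by rw [← valence, hi.2]; omega) j
    rw [mem_filter] at hj'
    exact mem_biUnion.2 ⟨j', mem_filter.2 ⟨hj'.1,
      Or.inr ⟨j, j', rfl, rfl, hne.symm, hj, hj'.1, i, hi.2, hi.1, hj'.2⟩⟩,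
      mem_inter.2 ⟨hi.1, hj'.2⟩⟩
  have hblack : #{i ∈ Γ j | valence n Γ i = 2} ≤ #B :=
    calc _ ≤ #(B.biUnion fun j' => Γ j ∩ Γ j') := card_le_card hcover
      _ ≤ #B * 1 := card_biUnion_le_card_mul _ _ _ fun j' hj' =>
          hΓ.card_inter_le_one hn hdag hj (mem_filter.1 hj').1
            fun h => ne_of_piAdj (mem_filter.1 hj').2 (congrArg Sum.inl h)
      _ = #B := mul_one _
  have hsplit := hΓ.card_valence_two_add_card_valence_three (hΓ.subset j hj)
  rw [hΓ.card_eq j hj] at hsplit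
  have hsub : B.disjSum {i ∈ Γ j | valence n Γ i = 3} ⊆
      {b ∈ piVertices n Γ | piAdj n Γ (Sum.inl j) b} := by
    rintro (j' | i) h
    · simp only [inl_mem_disjSum, B, mem_filter] at h
      simp [piVertices, h.1, h.2]
    · simp only [inr_mem_disjSum, mem_filter] at h
      refine mem_filter.2 ⟨?_, Or.inl ⟨j, i, Or.inl ⟨rfl, rfl⟩, hj, h.2, h.1⟩⟩
      simp [piVertices, trivalent, hΓ.subset j hj h.1, h.2]
  calc 3 ≤ #B + #{i ∈ Γ j | valence n Γ i = 3} := by omega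
    _ = #(B.disjSum {i ∈ Γ j | valence n Γ i = 3}) := (card_disjSum _ _).symm
    _ ≤ _ := card_le_card hsub

lemma three_le_card_piAdj (hΓ : TripleSystem n Γ) (hn : 5 ≤ n)
    (hdag : ∀ S ⊆ Icc 1 (n - 2), 2 ≤ #S → #S ≤ n - 3 → #S + 3 ≤ #(S.biUnion Γ))
    {a : ℕ ⊕ ℕ} (ha : a ∈ piVertices n Γ) :
    3 ≤ #{b ∈ piVertices n Γ | piAdj n Γ a b} := by
  rcases a with j | i
  · exact hΓ.three_le_card_piAdj_inl hn hdag (inl_mem_disjSum.1 ha)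
  · exact three_le_card_piAdj_inr (inr_mem_disjSum.1 ha)

end TripleSystem

noncomputable def blackSet (n : ℕ) (Y : Set (ℕ ⊕ ℕ)) : Finset ℕ :=
  {j ∈ Icc 1 (n - 2) | Sum.inl j ∈ Y}

noncomputable def whiteSet (n : ℕ) (Γ : ℕ → Finset ℕ) (Y : Set (ℕ ⊕ ℕ)) : Finset ℕ :=
  {i ∈ trivalent n Γ | Sum.inr i ∈ Y}

lemma disjSum_blackSet_whiteSet (Y : Set (ℕ ⊕ ℕ)) :
    (blackSet n Y).disjSum (whiteSet n Γ Y) = {a ∈ piVertices n Γ | a ∈ Y} := by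
  ext (j | i) <;> simp [blackSet, whiteSet, piVertices]

/-- Each incidence between a triple of `S` and an element of `W` accounts for two ordered pairs of
adjacent vertices, and a valence-2 element lying in `m` triples of `S` for at most `m (m - 1)`. -/
def adjPairBound (n : ℕ) (Γ : ℕ → Finset ℕ) (S W : Finset ℕ) : ℕ :=
  2 * ∑ i ∈ W, valenceIn Γ S i + ∑ i ∈ bivalent n Γ, valenceIn Γ S i * (valenceIn Γ S i - 1)

def CaseBound (n s w K : ℕ) : Prop :=
  (s = 0 ∧ K = 0) ∨ (s = 1 ∧ K ≤ 2 * w) ∨ (2 ≤ s ∧ s + 3 ≤ n ∧ K + 6 ≤ 2 * w + 4 * s) ∨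
    (s + 2 = n ∧ K ≤ 6 * w + 12)

lemma adjPairBound_empty (W : Finset ℕ) : adjPairBound n Γ ∅ W = 0 := by
  simp [adjPairBound, valenceIn]

namespace TripleSystem

lemma ncard_innerSet_le (hΓ : TripleSystem n Γ) (Y : Set (ℕ ⊕ ℕ)) :
    (innerSet (piAdj n Γ) Y).ncard ≤ adjPairBound n Γ (blackSet n Y) (whiteSet n Γ Y) := by
  set S := blackSet n Y
  set W := whiteSet n Γ Y
  let inc : ℕ → Finset ℕ := fun i => {j ∈ S | i ∈ Γ j}
  let P := W.biUnion fun i =>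
    (inc i).image fun j => ((Sum.inl j, Sum.inr i) : (ℕ ⊕ ℕ) × (ℕ ⊕ ℕ))
  let Q := (bivalent n Γ).biUnion fun i =>
    (inc i).offDiag.image fun q => ((Sum.inl q.1, Sum.inl q.2) : (ℕ ⊕ ℕ) × (ℕ ⊕ ℕ))
  have hmem {j i : ℕ} (hj : j ∈ Icc 1 (n - 2)) (hi : valence n Γ i = 3) (hij : i ∈ Γ j)
      (hjY : Sum.inl j ∈ Y) (hiY : Sum.inr i ∈ Y) : (Sum.inl j, Sum.inr i) ∈ P :=
    mem_biUnion.2 ⟨i, mem_filter.2 ⟨mem_filter.2 ⟨hΓ.subset j hj hij, hi⟩, hiY⟩,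
      mem_image_of_mem _ (mem_filter.2 ⟨mem_filter.2 ⟨hj, hjY⟩, hij⟩)⟩
  have hcover : innerSet (piAdj n Γ) Y ⊆ ↑(P ∪ P.image Prod.swap ∪ Q) := by
    rintro ⟨a, b⟩ ⟨hab, ha, hb⟩
    rcases hab with ⟨j, i, ⟨rfl, rfl⟩ | ⟨rfl, rfl⟩, hj, hi, hij⟩ |
      ⟨j, j', rfl, rfl, hne, hj, hj', i, hi, hij, hij'⟩
    · exact mem_union_left _ (mem_union_left _ (hmem hj hi hij ha hb))
    · exact mem_union_left _ (mem_union_right _ (mem_image_of_mem _ (hmem hj hi hij hb ha)))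
    · have hjj' : (j, j') ∈ (inc i).offDiag :=
        mem_offDiag.2 ⟨mem_filter.2 ⟨mem_filter.2 ⟨hj, ha⟩, hij⟩,
          mem_filter.2 ⟨mem_filter.2 ⟨hj', hb⟩, hij'⟩, hne⟩
      exact mem_union_right _ (mem_biUnion.2
        ⟨i, mem_filter.2 ⟨hΓ.subset j hj hij, hi⟩, mem_image_of_mem _ hjj'⟩)
  have hP : #P ≤ ∑ i ∈ W, valenceIn Γ S i :=
    card_biUnion_le.trans (sum_le_sum fun _ _ => card_image_le)
  have hQ : #Q ≤ ∑ i ∈ bivalent n Γ, valenceIn Γ S i * (valenceIn Γ S i - 1) :=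
    card_biUnion_le.trans (sum_le_sum fun _ _ => card_image_le.trans (by
      rw [offDiag_card, Nat.mul_sub_one]; rfl))
  calc (innerSet (piAdj n Γ) Y).ncard ≤ #(P ∪ P.image Prod.swap ∪ Q) := by
        rw [← Set.ncard_coe_finset]
        exact Set.ncard_le_ncard hcover (finite_toSet _)
    _ ≤ #P + #(P.image Prod.swap) + #Q :=
        (card_union_le _ _).trans (by gcongr; exact card_union_le _ _)
    _ ≤ #P + #P + #Q := by grw [card_image_le (s := P)]
    _ ≤ _ := by rw [adjPairBound]; omega

lemma adjPairBound_add_two_mul_card_biUnion_le (hΓ : TripleSystem n Γ) {S W : Finset ℕ}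
    (hS : S ⊆ Icc 1 (n - 2)) (hW : W ⊆ trivalent n Γ) :
    adjPairBound n Γ S W + 2 * #(S.biUnion Γ) ≤ 2 * #W + 6 * #S := by
  have hT := sum_valenceIn_sub_one_add_card_biUnion Γ (T := Icc 1 n)
    fun j hj => hΓ.subset j (hS hj)
  rw [sum_congr rfl fun j hj => hΓ.card_eq j (hS hj), sum_const, smul_eq_mul] at hT
  have hE : ∑ i ∈ W, valenceIn Γ S i ≤ ∑ i ∈ W, (valenceIn Γ S i - 1) + #W := by
    rw [card_eq_sum_ones, ← sum_add_distrib]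
    exact sum_le_sum fun i _ => by omega
  have hQ : ∑ i ∈ bivalent n Γ, valenceIn Γ S i * (valenceIn Γ S i - 1) ≤
      2 * ∑ i ∈ bivalent n Γ, (valenceIn Γ S i - 1) := by
    rw [mul_sum]
    exact sum_le_sum fun i hi => Nat.mul_le_mul_right _
      ((valenceIn_le_valence hS i).trans (mem_filter.1 hi).2.le)
  have hdisj : Disjoint W (bivalent n Γ) := disjoint_left.2 fun i hiW hiB => by
    have h3 := (mem_filter.1 (hW hiW)).2
    have h2 := (mem_filter.1 hiB).2
    omega
  have hsum : ∑ i ∈ W, (valenceIn Γ S i - 1) + ∑ i ∈ bivalent n Γ, (valenceIn Γ S i - 1) ≤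
      ∑ i ∈ Icc 1 n, (valenceIn Γ S i - 1) := by
    rw [← sum_union hdisj]
    exact sum_le_sum_of_subset (union_subset (hW.trans (filter_subset _ _)) (filter_subset _ _))
  rw [adjPairBound]
  omega

lemma adjPairBound_le (hΓ : TripleSystem n Γ) (hn : 2 ≤ n) {S W : Finset ℕ}
    (hS : S ⊆ Icc 1 (n - 2)) (hW : W ⊆ trivalent n Γ) :
    adjPairBound n Γ S W ≤ 6 * #W + 12 := by
  have hE : ∑ i ∈ W, valenceIn Γ S i ≤ #W * 3 := sum_le_card_nsmul _ _ _ fun i hi =>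
    (valenceIn_le_valence hS i).trans (mem_filter.1 (hW hi)).2.le
  have hQ : ∑ i ∈ bivalent n Γ, valenceIn Γ S i * (valenceIn Γ S i - 1) ≤
      #(bivalent n Γ) * 2 := by
    refine sum_le_card_nsmul _ _ _ fun i hi => ?_
    have : valenceIn Γ S i ≤ 2 := (valenceIn_le_valence hS i).trans (mem_filter.1 hi).2.le
    exact Nat.mul_le_mul this (Nat.sub_le_sub_right this 1)
  rw [adjPairBound, hΓ.card_bivalent hn] at *
  omega

lemma adjPairBound_cases (hΓ : TripleSystem n Γ) (hn : 6 ≤ n)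
    (hddag : ∀ S ⊆ Icc 1 (n - 2), S.Nonempty → #S + 2 ≤ #(S.biUnion Γ))
    (hdag : ∀ S ⊆ Icc 1 (n - 2), 2 ≤ #S → #S ≤ n - 3 → #S + 3 ≤ #(S.biUnion Γ))
    {S W : Finset ℕ} (hS : S ⊆ Icc 1 (n - 2)) (hW : W ⊆ trivalent n Γ) :
    CaseBound n #S #W (adjPairBound n Γ S W) := by
  unfold CaseBound
  rcases S.eq_empty_or_nonempty with rfl | hne
  · exact Or.inl ⟨card_empty, adjPairBound_empty W⟩
  have hsn : #S ≤ n - 2 := (card_le_card hS).trans (by simp)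
  have hpos := card_pos.2 hne
  have h1 := hΓ.adjPairBound_add_two_mul_card_biUnion_le hS hW
  have h2 := hΓ.adjPairBound_le (by omega) hS hW
  have hU := hddag S hS hne
  by_cases hs : 2 ≤ #S ∧ #S ≤ n - 3
  · have := hdag S hS hs.1 hs.2
    omega
  · omega

lemma card_whiteSet_add_six_le (hΓ : TripleSystem n Γ) (hn : 2 ≤ n) (Y : Set (ℕ ⊕ ℕ)) :
    #(whiteSet n Γ Y) + 6 ≤ n :=
  calc #(whiteSet n Γ Y) + 6 ≤ #(trivalent n Γ) + 6 := by gcongr; exact filter_subset _ _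
    _ = n := hΓ.card_trivalent_add_six hn

lemma mem_of_card_blackSet_add_card_whiteSet (hΓ : TripleSystem n Γ) (hn : 2 ≤ n)
    {Y : Set (ℕ ⊕ ℕ)} (h : #(blackSet n Y) + #(whiteSet n Γ Y) + 8 = 2 * n) {a : ℕ ⊕ ℕ}
    (ha : a ∈ piVertices n Γ) : a ∈ Y := by
  have hcard : #{a ∈ piVertices n Γ | a ∈ Y} = #(piVertices n Γ) := by
    have := hΓ.card_trivalent_add_six hn
    rw [← disjSum_blackSet_whiteSet, card_disjSum, piVertices, card_disjSum, Nat.card_Icc]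
    omega
  exact filter_card_eq hcard a ha

lemma ncard_white_eq_card_whiteSet (hΓ : TripleSystem n Γ) (Y : Set ((ℕ ⊕ ℕ) ⊕ Unit)) :
    {i : ℕ | valence n Γ i = 3 ∧ Sum.inl (Sum.inr i) ∈ Y}.ncard =
      #(whiteSet n Γ (Sum.inl ⁻¹' Y)) := by
  rw [← Set.ncard_coe_finset, whiteSet, coe_filter]
  congr 1
  ext i
  simp only [trivalent, mem_filter, Set.mem_ofPred_eq, Set.mem_preimage]
  exact ⟨fun h => ⟨⟨hΓ.mem_Icc_of_valence_pos (by omega), h.1⟩, h.2⟩, fun h => ⟨h.1.2, h.2⟩⟩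

end TripleSystem

lemma ncard_black_eq_card_blackSet (Y : Set ((ℕ ⊕ ℕ) ⊕ Unit)) :
    {j : ℕ | j ∈ Icc 1 (n - 2) ∧ Sum.inl (Sum.inl j) ∈ Y}.ncard =
      #(blackSet n (Sum.inl ⁻¹' Y)) := by
  rw [← Set.ncard_coe_finset, blackSet, coe_filter]
  rfl

lemma weighted_bound_of_cases {s w K : ℕ} {γ : ℤ} (hn : 6 ≤ n) (hw : w + 6 ≤ n)
    (hK : CaseBound n s w K)
    (hγ : γ ≤ 2) (hγ0 : s = 0 → γ ≤ 0) (hγfull : s + w + 8 = 2 * n → γ ≤ 0) :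
    ((n : ℤ) - 4) * (K + γ) ≤ (4 * n - 18) * s + (2 * n - 10) * w := by
  have h4 : (0 : ℤ) ≤ n - 4 := by omega
  have hγ' : (n - 4 : ℤ) * γ ≤ 2 * n - 8 := by nlinarith
  rcases hK with ⟨rfl, rfl⟩ | ⟨rfl, hK⟩ | ⟨hs, hs', hK⟩ | ⟨rfl, hK⟩
  · nlinarith [hγ0 rfl]
  · push_cast
    nlinarith [mul_le_mul_of_nonneg_left (show (K : ℤ) ≤ 2 * w by exact_mod_cast hK) h4]
  · nlinarith [mul_le_mul_of_nonneg_left (show (K : ℤ) ≤ 2 * w + 4 * s - 6 by omega) h4]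
  · have hKm := mul_le_mul_of_nonneg_left (show (K : ℤ) ≤ 6 * w + 12 by exact_mod_cast hK) h4
    push_cast at hKm ⊢
    by_cases hwn : w + 6 = s + 2
    · nlinarith [hγfull (by omega)]
    · nlinarith [mul_nonneg (show (0 : ℤ) ≤ s + 2 - 7 - w by omega)
        (show (0 : ℤ) ≤ 4 * (s + 2) - 14 by omega)]

/-- `cut` and `cut'` are the cuts of `Y` before and after subdividing `{L, v}` by `Z`, and
`PL`, `Pv`, `PZ` say that `L`, `v`, `Z` lie in `Y`. -/
lemma gieseker_inequality_of_counts {s w K cut cut' : ℕ} {PL Pv PZ : Prop}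
    (hn : 6 ≤ n) (hw : w + 6 ≤ n) (hdeg : 3 * (s + w) ≤ cut + K)
    (hK : CaseBound n s w K)
    (hL : PL → 0 < s) (hv : s + w + 8 = 2 * n → Pv)
    (hcut : cut' + (if (PL ↔ Pv) then 0 else 1) =
      cut + (if (PL ↔ PZ) then 0 else 1) + (if (PZ ↔ Pv) then 0 else 1)) :
    ((n : ℤ) - 2) * w - ((n : ℤ) - 6) * s +
        (2 * (n : ℤ) - 8) * (if PL ∧ ¬PZ then 1 else if PZ ∧ ¬PL then -1 else 0) ≤
      ((n : ℤ) - 4) * cut' := by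
  set ε : ℤ := if PL ∧ ¬PZ then 1 else if PZ ∧ ¬PL then -1 else 0 with hε
  have h4 : (0 : ℤ) ≤ n - 4 := by omega
  have hcutK : ((n : ℤ) - 4) * (3 * (s + w) - K) ≤ (n - 4) * cut :=
    mul_le_mul_of_nonneg_left (by omega) h4
  -- `2 * ε - (cut' - cut)` is positive only when `L ∈ Y` and `v, Z ∉ Y`, where it equals `2`.
  have := weighted_bound_of_cases (γ := 2 * ε - (cut' - cut)) hn hw hK ?_ ?_ ?_
  · nlinarith
  all_goals
    rw [hε]
    by_cases hPL : PL <;> by_cases hPv : Pv <;> by_cases hPZ : PZ <;>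
      simp only [hPL, hPv, hPZ, iff_self, iff_true, iff_false, not_true_eq_false,
        not_false_eq_true, and_self, and_true, and_false, if_true, if_false, true_implies,
        imp_false] at hcut hL hv ⊢ <;> omega

end Gieseker

open Gieseker in
theorem gieseker_semistable_inequality_general (n : ℕ) (hn : 6 ≤ n) (Γ : ℕ → Finset ℕ)
    (hsub : ∀ j ∈ Finset.Icc 1 (n - 2), Γ j ⊆ Finset.Icc 1 n)
    (hcard : ∀ j ∈ Finset.Icc 1 (n - 2), (Γ j).card = 3)
    (hval : ∀ i ∈ Finset.Icc 1 n, valence n Γ i = 2 ∨ valence n Γ i = 3)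
    (hddag : ∀ S ⊆ Finset.Icc 1 (n - 2), S.Nonempty →
      S.card + 2 ≤ (S.biUnion Γ).card)
    (hdag : ∀ S ⊆ Finset.Icc 1 (n - 2), 2 ≤ S.card → S.card ≤ n - 3 →
      S.card + 3 ≤ (S.biUnion Γ).card)
    (jL : ℕ) (v : ℕ ⊕ ℕ) (he : piAdj n Γ (Sum.inl jL) v)
    (Y : Set ((ℕ ⊕ ℕ) ⊕ Unit)) :
    ((n : ℤ) - 2) * Set.ncard {i : ℕ | valence n Γ i = 3 ∧ Sum.inl (Sum.inr i) ∈ Y} -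
      ((n : ℤ) - 6) * Set.ncard {j : ℕ | j ∈ Finset.Icc 1 (n - 2) ∧
        Sum.inl (Sum.inl j) ∈ Y} +
      (2 * (n : ℤ) - 8) * eps (Sum.inl jL) Y ≤
    ((n : ℤ) - 4) * edgeBoundary n Γ (Sum.inl jL) v Y := by
  have hΓ : TripleSystem n Γ := ⟨hsub, hcard, hval⟩
  have hV {a b : ℕ ⊕ ℕ} (h : piAdj n Γ a b) := hΓ.mem_piVertices_of_piAdj h
  have hfin : (cutSet (piAdj n Γ) (Sum.inl ⁻¹' Y)).Finite :=
    (piVertices n Γ ×ˢ piVertices n Γ).finite_toSet.subset fun p hp => by simpa using hV hp.1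
  have hsubdiv := ncard_cutSet_subdivAdj (ne_of_piAdj he)
    (fun a b h => h.elim (fun ⟨ha, hb⟩ => ha ▸ hb ▸ he) fun ⟨ha, hb⟩ => ha ▸ hb ▸ piAdj_symm he)
    Y hfin
  rw [← hatAdj_eq_subdivAdj] at hsubdiv
  have hdeg := mul_card_le_ncard_cutSet_add_ncard_innerSet (fun a b h => hV h)
    (A := {a ∈ piVertices n Γ | a ∈ Sum.inl ⁻¹' Y}) (fun a ha => (mem_filter.1 ha).2)
    fun a ha => hΓ.three_le_card_piAdj (by omega) hdag (mem_filter.1 ha).1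
  rw [← disjSum_blackSet_whiteSet, card_disjSum] at hdeg
  have hinner := hΓ.ncard_innerSet_le (Sum.inl ⁻¹' Y)
  have hL : Sum.inl (Sum.inl jL) ∈ Y → 0 < #(blackSet n (Sum.inl ⁻¹' Y)) := fun h =>
    card_pos.2 ⟨jL, mem_filter.2 ⟨inl_mem_disjSum.1 (hV he).1, h⟩⟩
  rw [hΓ.ncard_white_eq_card_whiteSet, ncard_black_eq_card_blackSet, edgeBoundary]
  exact gieseker_inequality_of_counts hn (hΓ.card_whiteSet_add_six_le (by omega) _)
    (by omega) (hΓ.adjPairBound_cases hn hddag hdag (filter_subset _ _) (filter_subset _ _)) hL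
    (fun h => hΓ.mem_of_card_blackSet_add_card_whiteSet (by omega) h (hV he).2) hsubdiv

/-- The non-strict Gieseker basic inequality for the subdivided dual graph: for a
3-uniform hypergraph `Γ_1,…,Γ_{n-2}` on `{1,…,n}` (n ≥ 6) with valences 2 or 3,
satisfying (‡) and (†), with `e = {L, v}` an edge of the dual graph `Π` with black
endpoint `L = Sum.inl jL`, and `Π̂` the subdivision of `Π` at `e` by a new vertex `Z`,
every `Y` with `∅ ≠ Y ≠ V(Π̂)` satisfies
`(n−2)·w(Y) − (n−6)·b(Y) + (2n−8)·ε(Y) ≤ (n−4)·#(Y)`. -/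
theorem gieseker_semistable_inequality (n : ℕ) (hn : 6 ≤ n) (Γ : ℕ → Finset ℕ)
    (hsub : ∀ j ∈ Finset.Icc 1 (n - 2), Γ j ⊆ Finset.Icc 1 n)
    (hcard : ∀ j ∈ Finset.Icc 1 (n - 2), (Γ j).card = 3)
    (hval : ∀ i ∈ Finset.Icc 1 n, valence n Γ i = 2 ∨ valence n Γ i = 3)
    (hddag : ∀ S ⊆ Finset.Icc 1 (n - 2), S.Nonempty →
      S.card + 2 ≤ (S.biUnion Γ).card)
    (hdag : ∀ S ⊆ Finset.Icc 1 (n - 2), 2 ≤ S.card → S.card ≤ n - 3 →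
      S.card + 3 ≤ (S.biUnion Γ).card)
    (jL : ℕ) (v : ℕ ⊕ ℕ) (he : piAdj n Γ (Sum.inl jL) v)
    (Y : Set ((ℕ ⊕ ℕ) ⊕ Unit)) (hY : Y ⊆ hatVertexSet n Γ)
    (hY1 : Y ≠ ∅) (hY2 : Y ≠ hatVertexSet n Γ) :
    ((n : ℤ) - 2) * Set.ncard {i : ℕ | valence n Γ i = 3 ∧ Sum.inl (Sum.inr i) ∈ Y} -
      ((n : ℤ) - 6) * Set.ncard {j : ℕ | j ∈ Finset.Icc 1 (n - 2) ∧
        Sum.inl (Sum.inl j) ∈ Y} +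
      (2 * (n : ℤ) - 8) * eps (Sum.inl jL) Y ≤
    ((n : ℤ) - 4) * edgeBoundary n Γ (Sum.inl jL) v Y :=
  gieseker_semistable_inequality_general n hn Γ hsub hcard hval hddag hdag jL v he Y
end

section
/- Let n ≥ 6 and let Γ_1,…,Γ_{n−2} be 3-element subsets of N = {1,…,n} such that every element of N has valence 2 or 3 and condition (†) holds. Let Π be the dual graph of Γ. Then for any two edges e_1, e_2 of Π, the graph obtained from Π by deleting e_1 and e_2 is still connected. -/
open Finset

/-- The vertex set of the dual graph `Π`. -/
def piVertexSet (n : ℕ) (Γ : ℕ → Finset ℕ) : Set (ℕ ⊕ ℕ) :=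
  {x | (∃ j ∈ Finset.Icc 1 (n - 2), x = Sum.inl j) ∨
       (∃ i, valence n Γ i = 3 ∧ x = Sum.inr i)}

/-!
If `x` and `y` were separated after deleting two edges, the vertices reachable from `x` would
form a side `A` of a cut of `Π` with at most two edges. So it suffices that every cut has at
least three edges. If `A` contains no black vertex, it contains a white vertex, all three of
whose edges cross; symmetrically if the complement contains no black vertex. Otherwise the
triples split as `S ⊔ T` with both parts nonempty, and by (†)
`|⋃ S ∩ ⋃ T| = |⋃ S| + |⋃ T| - n ≥ 3`. Each element `i` of this intersection yields a crossing
edge through `i` (black–black if `i` has valence 2, black–white otherwise), and distinct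
elements yield distinct edges because two triples share at most one element.
-/

def DaggerCondition (n : ℕ) (Γ : ℕ → Finset ℕ) : Prop :=
  ∀ S ⊆ Finset.Icc 1 (n - 2), 2 ≤ S.card → S.card ≤ n - 3 → S.card + 3 ≤ (S.biUnion Γ).card

section Cut

variable {α : Type*}

def IsCrossing (r : α → α → Prop) (A : Set α) (e : Sym2 α) : Prop :=
  ∃ a ∈ A, ∃ b ∉ A, r a b ∧ s(a, b) = e

theorem reflTransGen_of_card_lt_crossing (r : α → α → Prop) (D : Finset (Sym2 α)) {x y : α}
    (hcut : ∀ A : Set α, x ∈ A → y ∉ A →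
      ∃ s : Finset (Sym2 α), D.card < s.card ∧ ∀ e ∈ s, IsCrossing r A e) :
    Relation.ReflTransGen (fun u w => r u w ∧ s(u, w) ∉ D) x y := by
  by_contra hxy
  obtain ⟨s, hlt, hs⟩ :=
    hcut {z | Relation.ReflTransGen (fun u w => r u w ∧ s(u, w) ∉ D) x z} .refl hxy
  obtain ⟨e, he, heD⟩ := exists_mem_notMem_of_card_lt_card hlt
  obtain ⟨a, ha, b, hb, hab, rfl⟩ := hs e he
  exact hb (Relation.ReflTransGen.tail ha ⟨hab, heD⟩)

end Cut

section Hypergraph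

variable {n : ℕ} {Γ : ℕ → Finset ℕ}

theorem card_inter_le_one_of_ne (hn : 5 ≤ n) (hcard : ∀ j ∈ Icc 1 (n - 2), (Γ j).card = 3)
    (hdag : DaggerCondition n Γ) {j j' : ℕ} (hj : j ∈ Icc 1 (n - 2))
    (hj' : j' ∈ Icc 1 (n - 2)) (hne : j ≠ j') : (Γ j ∩ Γ j').card ≤ 1 := by
  have h := hdag {j, j'} (by simp [insert_subset_iff, hj, hj']) (by rw [card_pair hne])
    (by rw [card_pair hne]; omega)
  rw [card_pair hne, biUnion_insert, singleton_biUnion] at h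
  have := card_union_add_card_inter (Γ j) (Γ j')
  have := hcard j hj
  have := hcard j' hj'
  omega

theorem card_add_three_le_card_biUnion_or_card_eq_one
    (hcard : ∀ j ∈ Icc 1 (n - 2), (Γ j).card = 3) (hdag : DaggerCondition n Γ)
    {S : Finset ℕ} (hS : S ⊆ Icc 1 (n - 2)) (hne : S.Nonempty) (hle : S.card ≤ n - 3) :
    S.card + 3 ≤ (S.biUnion Γ).card ∨ (S.card = 1 ∧ (S.biUnion Γ).card = 3) := by
  rcases (one_le_card.2 hne).eq_or_lt with h | h
  · obtain ⟨j, rfl⟩ := card_eq_one.1 h.symm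
    exact Or.inr ⟨rfl, by simpa using hcard j (hS (mem_singleton_self j))⟩
  · exact Or.inl (hdag S hS h hle)

theorem three_le_card_inter_biUnion (hn : 5 ≤ n) (hsub : ∀ j ∈ Icc 1 (n - 2), Γ j ⊆ Icc 1 n)
    (hcard : ∀ j ∈ Icc 1 (n - 2), (Γ j).card = 3) (hdag : DaggerCondition n Γ)
    {S T : Finset ℕ} (hdisj : Disjoint S T) (hunion : S ∪ T = Icc 1 (n - 2))
    (hS : S.Nonempty) (hT : T.Nonempty) :
    3 ≤ (S.biUnion Γ ∩ T.biUnion Γ).card := by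
  have hST : S.card + T.card = n - 2 := by
    rw [← card_union_of_disjoint hdisj, hunion, Nat.card_Icc]; omega
  have hcover : (S.biUnion Γ ∪ T.biUnion Γ).card ≤ n := by
    rw [← union_biUnion, hunion]
    simpa using card_le_card (biUnion_subset.2 hsub)
  have := card_union_add_card_inter (S.biUnion Γ) (T.biUnion Γ)
  have := hS.card_pos
  have := hT.card_pos
  rcases card_add_three_le_card_biUnion_or_card_eq_one hcard hdag
    (hunion ▸ subset_union_left) hS (by omega) with hS' | hS' <;>
  rcases card_add_three_le_card_biUnion_or_card_eq_one hcard hdag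
    (hunion ▸ subset_union_right) hT (by omega) with hT' | hT' <;>
  omega

/-- The elements of `N` incident to a vertex of `Π`: an edge of `Π` arises from an element
incident to both of its ends. -/
def piSupport (Γ : ℕ → Finset ℕ) : ℕ ⊕ ℕ → Finset ℕ :=
  Sum.elim Γ singleton

theorem card_piSupport_inter_le_one (hn : 5 ≤ n) (hcard : ∀ j ∈ Icc 1 (n - 2), (Γ j).card = 3)
    (hdag : DaggerCondition n Γ) {a b : ℕ ⊕ ℕ} (hab : piAdj n Γ a b) :
    (piSupport Γ a ∩ piSupport Γ b).card ≤ 1 := by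
  rcases hab with ⟨j, i, ⟨rfl, rfl⟩ | ⟨rfl, rfl⟩, -⟩ | ⟨j, j', rfl, rfl, hne, hj, hj', -⟩
  · exact (card_le_card inter_subset_right).trans (card_singleton i).le
  · exact (card_le_card inter_subset_left).trans (card_singleton i).le
  · exact card_inter_le_one_of_ne hn hcard hdag hj hj' hne

theorem exists_crossing_mem_piSupport
    (hval : ∀ i ∈ Icc 1 n, valence n Γ i = 2 ∨ valence n Γ i = 3) (A : Set (ℕ ⊕ ℕ))
    {i j j' : ℕ} (hi : i ∈ Icc 1 n) (hj : j ∈ Icc 1 (n - 2)) (hj' : j' ∈ Icc 1 (n - 2))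
    (hjA : Sum.inl j ∈ A) (hj'A : Sum.inl j' ∉ A) (hij : i ∈ Γ j) (hij' : i ∈ Γ j') :
    ∃ a ∈ A, ∃ b ∉ A, piAdj n Γ a b ∧ i ∈ piSupport Γ a ∩ piSupport Γ b := by
  have hne : j ≠ j' := by rintro rfl; exact hj'A hjA
  rcases hval i hi with hv | hv
  · exact ⟨_, hjA, _, hj'A, Or.inr ⟨j, j', rfl, rfl, hne, hj, hj', i, hv, hij, hij'⟩,
      mem_inter.2 ⟨hij, hij'⟩⟩
  · by_cases hiA : Sum.inr i ∈ A
    · exact ⟨_, hiA, _, hj'A, Or.inl ⟨j', i, Or.inr ⟨rfl, rfl⟩, hj', hv, hij'⟩,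
        mem_inter.2 ⟨mem_singleton_self i, hij'⟩⟩
    · exact ⟨_, hjA, _, hiA, Or.inl ⟨j, i, Or.inl ⟨rfl, rfl⟩, hj, hv, hij⟩,
        mem_inter.2 ⟨hij, mem_singleton_self i⟩⟩

theorem three_le_card_crossing_of_black_on_both_sides (hn : 5 ≤ n)
    (hsub : ∀ j ∈ Icc 1 (n - 2), Γ j ⊆ Icc 1 n) (hcard : ∀ j ∈ Icc 1 (n - 2), (Γ j).card = 3)
    (hval : ∀ i ∈ Icc 1 n, valence n Γ i = 2 ∨ valence n Γ i = 3) (hdag : DaggerCondition n Γ)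
    (A : Set (ℕ ⊕ ℕ)) (hS : ∃ j ∈ Icc 1 (n - 2), Sum.inl j ∈ A)
    (hT : ∃ j ∈ Icc 1 (n - 2), Sum.inl j ∉ A) :
    ∃ s : Finset (Sym2 (ℕ ⊕ ℕ)), 3 ≤ s.card ∧ ∀ e ∈ s, IsCrossing (piAdj n Γ) A e := by
  classical
  set S := (Icc 1 (n - 2)).filter fun j => Sum.inl j ∈ A
  set T := (Icc 1 (n - 2)).filter fun j => Sum.inl j ∉ A
  set B := S.biUnion Γ ∩ T.biUnion Γ
  have hB : 3 ≤ B.card := by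
    obtain ⟨j, hj, hjA⟩ := hS
    obtain ⟨j', hj', hj'A⟩ := hT
    exact three_le_card_inter_biUnion hn hsub hcard hdag (disjoint_filter_filter_not _ _ _)
      (filter_union_filter_not_eq _ _) ⟨j, mem_filter.2 ⟨hj, hjA⟩⟩ ⟨j', mem_filter.2 ⟨hj', hj'A⟩⟩
  have hedge : ∀ i ∈ B, ∃ a b, a ∈ A ∧ b ∉ A ∧ piAdj n Γ a b ∧
      i ∈ piSupport Γ a ∩ piSupport Γ b := by
    intro i hi
    obtain ⟨j, hjS, hij⟩ := mem_biUnion.1 (mem_inter.1 hi).1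
    obtain ⟨j', hj'T, hij'⟩ := mem_biUnion.1 (mem_inter.1 hi).2
    rw [mem_filter] at hjS hj'T
    obtain ⟨a, ha, b, hb, hab, hiab⟩ := exists_crossing_mem_piSupport hval A
      (hsub j hjS.1 hij) hjS.1 hj'T.1 hjS.2 hj'T.2 hij hij'
    exact ⟨a, b, ha, hb, hab, hiab⟩
  choose! a b hab using hedge
  refine ⟨B.image fun i => s(a i, b i), ?_, ?_⟩
  · rwa [card_image_of_injOn]
    intro i hi i' hi' heq
    obtain ⟨-, -, hadj, hi_mem⟩ := hab i hi
    obtain ⟨-, -, -, hi'_mem⟩ := hab i' hi'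
    have hi'_mem' : i' ∈ piSupport Γ (a i) ∩ piSupport Γ (b i) := by
      rcases Sym2.eq_iff.1 heq with ⟨h1, h2⟩ | ⟨h1, h2⟩
      · rwa [h1, h2]
      · rwa [h1, h2, inter_comm]
    exact card_le_one.1 (card_piSupport_inter_le_one hn hcard hdag hadj) _ hi_mem _ hi'_mem'
  · simp only [forall_mem_image]
    intro i hi
    obtain ⟨ha, hb, hadj, -⟩ := hab i hi
    exact ⟨_, ha, _, hb, hadj, rfl⟩

theorem three_le_card_crossing_of_white {i : ℕ} (hi : valence n Γ i = 3) (A : Set (ℕ ⊕ ℕ))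
    (hA : ∀ j ∈ Icc 1 (n - 2), i ∈ Γ j → (Sum.inl j ∈ A ↔ Sum.inr i ∉ A)) :
    ∃ s : Finset (Sym2 (ℕ ⊕ ℕ)), 3 ≤ s.card ∧ ∀ e ∈ s, IsCrossing (piAdj n Γ) A e := by
  refine ⟨((Icc 1 (n - 2)).filter (i ∈ Γ ·)).image fun j => s(Sum.inl j, Sum.inr i), ?_, ?_⟩
  · rw [card_image_of_injective _ fun j j' h => Sum.inl_injective (Sym2.congr_left.1 h)]
    exact hi.ge
  · simp only [forall_mem_image, mem_filter]
    rintro j ⟨hj, hij⟩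
    by_cases hiA : Sum.inr i ∈ A
    · exact ⟨_, hiA, _, fun h => (hA j hj hij).1 h hiA,
        Or.inl ⟨j, i, Or.inr ⟨rfl, rfl⟩, hj, hi, hij⟩, Sym2.eq_swap⟩
    · exact ⟨_, (hA j hj hij).2 hiA, _, hiA, Or.inl ⟨j, i, Or.inl ⟨rfl, rfl⟩, hj, hi, hij⟩, rfl⟩

theorem three_le_card_crossing (hn : 5 ≤ n) (hsub : ∀ j ∈ Icc 1 (n - 2), Γ j ⊆ Icc 1 n)
    (hcard : ∀ j ∈ Icc 1 (n - 2), (Γ j).card = 3)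
    (hval : ∀ i ∈ Icc 1 n, valence n Γ i = 2 ∨ valence n Γ i = 3) (hdag : DaggerCondition n Γ)
    {A : Set (ℕ ⊕ ℕ)} {x y : ℕ ⊕ ℕ} (hx : x ∈ piVertexSet n Γ) (hy : y ∈ piVertexSet n Γ)
    (hxA : x ∈ A) (hyA : y ∉ A) :
    ∃ s : Finset (Sym2 (ℕ ⊕ ℕ)), 3 ≤ s.card ∧ ∀ e ∈ s, IsCrossing (piAdj n Γ) A e := by
  by_cases hS : ∃ j ∈ Icc 1 (n - 2), Sum.inl j ∈ A
  · by_cases hT : ∃ j ∈ Icc 1 (n - 2), Sum.inl j ∉ A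
    · exact three_le_card_crossing_of_black_on_both_sides hn hsub hcard hval hdag A hS hT
    · push Not at hT
      obtain ⟨j, hj, rfl⟩ | ⟨i, hi, rfl⟩ := hy
      · exact absurd (hT j hj) hyA
      · exact three_le_card_crossing_of_white hi A fun j hj _ => iff_of_true (hT j hj) hyA
  · push Not at hS
    obtain ⟨j, hj, rfl⟩ | ⟨i, hi, rfl⟩ := hx
    · exact absurd hxA (hS j hj)
    · exact three_le_card_crossing_of_white hi A fun j hj _ =>
        iff_of_false (hS j hj) (not_not.2 hxA)

end Hypergraph

theorem dual_graph_three_edge_connected_general (n : ℕ) (hn : 6 ≤ n) (Γ : ℕ → Finset ℕ)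
    (hsub : ∀ j ∈ Finset.Icc 1 (n - 2), Γ j ⊆ Finset.Icc 1 n)
    (hcard : ∀ j ∈ Finset.Icc 1 (n - 2), (Γ j).card = 3)
    (hval : ∀ i ∈ Finset.Icc 1 n, valence n Γ i = 2 ∨ valence n Γ i = 3)
    (hdag : ∀ S ⊆ Finset.Icc 1 (n - 2), 2 ≤ S.card → S.card ≤ n - 3 →
      S.card + 3 ≤ (S.biUnion Γ).card)
    (e1x e1y e2x e2y : ℕ ⊕ ℕ) :
    ∀ x ∈ piVertexSet n Γ, ∀ y ∈ piVertexSet n Γ,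
      Relation.ReflTransGen
        (fun u w => piAdj n Γ u w ∧
          ¬((u = e1x ∧ w = e1y) ∨ (u = e1y ∧ w = e1x)) ∧
          ¬((u = e2x ∧ w = e2y) ∨ (u = e2y ∧ w = e2x))) x y := by
  intro x hx y hy
  refine Relation.ReflTransGen.mono ?_ _ _ <|
    reflTransGen_of_card_lt_crossing (piAdj n Γ) {s(e1x, e1y), s(e2x, e2y)} fun A hxA hyA => ?_
  · rintro u w ⟨huw, hD⟩
    simp only [mem_insert, mem_singleton, Sym2.eq_iff, not_or] at hD
    exact ⟨huw, not_or.2 hD.1, not_or.2 hD.2⟩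
  · obtain ⟨s, hs, hcross⟩ := three_le_card_crossing (by omega) hsub hcard hval hdag hx hy hxA hyA
    exact ⟨s, card_le_two.trans_lt hs, hcross⟩

/-- For a 3-uniform hypergraph `Γ_1,…,Γ_{n-2}` on `{1,…,n}` (n ≥ 6) with all valences
2 or 3, satisfying condition (†), the dual graph `Π` remains connected after deleting
any two edges: any two vertices are still joined by a path avoiding both deleted
edges. -/
theorem dual_graph_three_edge_connected (n : ℕ) (hn : 6 ≤ n) (Γ : ℕ → Finset ℕ)
    (hsub : ∀ j ∈ Finset.Icc 1 (n - 2), Γ j ⊆ Finset.Icc 1 n)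
    (hcard : ∀ j ∈ Finset.Icc 1 (n - 2), (Γ j).card = 3)
    (hval : ∀ i ∈ Finset.Icc 1 n, valence n Γ i = 2 ∨ valence n Γ i = 3)
    (hdag : ∀ S ⊆ Finset.Icc 1 (n - 2), 2 ≤ S.card → S.card ≤ n - 3 →
      S.card + 3 ≤ (S.biUnion Γ).card)
    (e1x e1y e2x e2y : ℕ ⊕ ℕ)
    (he1 : piAdj n Γ e1x e1y) (he2 : piAdj n Γ e2x e2y) :
    ∀ x ∈ piVertexSet n Γ, ∀ y ∈ piVertexSet n Γ,
      Relation.ReflTransGen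
        (fun u w => piAdj n Γ u w ∧
          ¬((u = e1x ∧ w = e1y) ∨ (u = e1y ∧ w = e1x)) ∧
          ¬((u = e2x ∧ w = e2y) ∨ (u = e2y ∧ w = e2x))) x y :=
  dual_graph_three_edge_connected_general n hn Γ hsub hcard hval hdag e1x e1y e2x e2y
end
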